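/- arXiv:2503.16076 — 6 statements merged into one kernel-verified Lean document; each statement's English description precedes it below -/
import Mathlib

section
/- Let n = n_x + 1 and let F = (G h) ∈ ℝ^{f×n} satisfy the block structure F = [[G_1, 0],[G_2, h_2]] with G_1 ∈ ℝ^{f_1×n_x}, G_2 ∈ ℝ^{f_2×n_x}, h_2 ∈ ℝ^{f_2}, f = f_1 + f_2, f_2 > 0, where every component of h_2 is strictly negative and G_1 x ≤ 0 implies x = 0. Let z ∈ ℝ^f be such that the polyhedron P(z) := {(x,y) ∈ ℝ^{n_x}×ℝ : Gx + hy ≤ z} is non-empty. Then there exists a unique proper compact convex function M : ℝ^{n_x} → ℝ ∪ {∞} such that epi(M) = P(z). -/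
open Matrix Set MeasureTheory
open scoped Classical Pointwise

noncomputable section

def epiF {nx : ℕ} (M : (Fin nx → ℝ) → EReal) : Set ((Fin nx → ℝ) × ℝ) :=
  {p | M p.1 ≤ (p.2 : EReal)}

def domF {nx : ℕ} (M : (Fin nx → ℝ) → EReal) : Set (Fin nx → ℝ) :=
  {x | M x < ⊤}

def ProperCompactConvex {nx : ℕ} (M : (Fin nx → ℝ) → EReal) : Prop :=
  (∀ x, M x ≠ ⊥) ∧ (domF M).Nonempty ∧ IsCompact (domF M) ∧
    IsClosed (epiF M) ∧ Convex ℝ (epiF M)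

def Pset {nx f : ℕ} (G : Matrix (Fin f) (Fin nx) ℝ) (h : Fin f → ℝ)
    (z : Fin f → ℝ) : Set ((Fin nx → ℝ) × ℝ) :=
  {p | ∀ i, (G *ᵥ p.1) i + h i * p.2 ≤ z i}

def Kcone (nx : ℕ) : Set ((Fin nx → ℝ) × ℝ) := {p | p.1 = 0 ∧ 0 ≤ p.2}

def vertPt {nx f : ℕ} (R : Matrix (Fin nx) (Fin f) ℝ) (s : Fin f → ℝ)
    (z : Fin f → ℝ) : (Fin nx → ℝ) × ℝ := (R *ᵥ z, s ⬝ᵥ z)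

def ConfigTriplet {nx f e v : ℕ} (G : Matrix (Fin f) (Fin nx) ℝ) (h : Fin f → ℝ)
    (E : Matrix (Fin e) (Fin f) ℝ)
    (R : Fin v → Matrix (Fin nx) (Fin f) ℝ) (s : Fin v → Fin f → ℝ) : Prop :=
  ∀ z : Fin f → ℝ,
    Pset G h z = convexHull ℝ (Set.range fun i => vertPt (R i) (s i) z) + Kcone nx
      ↔ ∀ i, (E *ᵥ z) i ≤ 0

def PolyFamily {nx f e : ℕ} (G : Matrix (Fin f) (Fin nx) ℝ) (h : Fin f → ℝ)
    (E : Matrix (Fin e) (Fin f) ℝ) : Set (Set ((Fin nx → ℝ) × ℝ)) :=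
  {P | ∃ z : Fin f → ℝ, (∀ i, (E *ᵥ z) i ≤ 0) ∧ P = Pset G h z}

def indE {n : ℕ} (S : Set (Fin n → ℝ)) (x : Fin n → ℝ) : EReal :=
  if x ∈ S then 0 else ⊤

def IsLCLF {nx nu : ℕ} (A : Matrix (Fin nx) (Fin nx) ℝ) (B : Matrix (Fin nx) (Fin nu) ℝ)
    (𝕏 : Set (Fin nx → ℝ)) (𝕌 : Set (Fin nu → ℝ))
    (L : (Fin nx → ℝ) → (Fin nu → ℝ) → ℝ) (M : (Fin nx → ℝ) → EReal) : Prop :=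
  M 0 = 0 ∧ (∀ x, x ≠ 0 → 0 < M x) ∧ ProperCompactConvex M ∧
    ∀ x, (⨅ u ∈ 𝕌, ((L x u : EReal) + indE 𝕏 x + M (A *ᵥ x + B *ᵥ u))) ≤ M x

def RobustCLF {nx nu : ℕ}
    (𝔻 : Set (Matrix (Fin nx) (Fin nx) ℝ × Matrix (Fin nx) (Fin nu) ℝ × (Fin nx → ℝ)))
    (𝕏 : Set (Fin nx → ℝ)) (𝕌 : Set (Fin nu → ℝ))
    (L : (Fin nx → ℝ) → (Fin nu → ℝ) → ℝ) (M : (Fin nx → ℝ) → EReal) : Prop :=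
  (∀ x, 0 ≤ M x) ∧ ProperCompactConvex M ∧ (∃ xs ∈ 𝕏, M xs = 0) ∧
    ∀ x, (⨅ u ∈ 𝕌, ⨆ d ∈ 𝔻,
      ((L x u : EReal) + indE 𝕏 x + M (d.1 *ᵥ x + d.2.1 *ᵥ u + d.2.2))) ≤ M x

def IsRCI {nx nu : ℕ}
    (𝔻 : Set (Matrix (Fin nx) (Fin nx) ℝ × Matrix (Fin nx) (Fin nu) ℝ × (Fin nx → ℝ)))
    (𝕏 : Set (Fin nx → ℝ)) (𝕌 : Set (Fin nu → ℝ)) (X : Set (Fin nx → ℝ)) : Prop :=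
  X ⊆ 𝕏 ∧ IsCompact X ∧ Convex ℝ X ∧
    ∀ x ∈ X, ∃ u ∈ 𝕌, ∀ d ∈ 𝔻, d.1 *ᵥ x + d.2.1 *ᵥ u + d.2.2 ∈ X

def LPSDwrt {nx nu : ℕ}
    (𝔻 : Set (Matrix (Fin nx) (Fin nx) ℝ × Matrix (Fin nx) (Fin nu) ℝ × (Fin nx → ℝ)))
    (𝕌 : Set (Fin nu → ℝ)) (L : (Fin nx → ℝ) → (Fin nu → ℝ) → ℝ)
    (Xs : Set (Fin nx → ℝ)) : Prop :=
  ∀ x ∈ Xs, ∃ u ∈ 𝕌, L x u = 0 ∧ ∀ d ∈ 𝔻, d.1 *ᵥ x + d.2.1 *ᵥ u + d.2.2 ∈ Xs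

def RobustLambdaContractive {nx nu : ℕ}
    (𝔻 : Set (Matrix (Fin nx) (Fin nx) ℝ × Matrix (Fin nx) (Fin nu) ℝ × (Fin nx → ℝ)))
    (𝕌 : Set (Fin nu → ℝ)) (Xs : Set (Fin nx → ℝ)) (lam : ℝ)
    (X : Set (Fin nx → ℝ)) : Prop :=
  ∀ x ∈ X, ∃ u ∈ 𝕌, ∀ d ∈ 𝔻,
    d.1 *ᵥ x + d.2.1 *ᵥ u + d.2.2 ∈ lam • X + (1 - lam) • Xs

def Jcost {nx nu : ℕ} (A : Matrix (Fin nx) (Fin nx) ℝ) (B : Matrix (Fin nx) (Fin nu) ℝ)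
    (𝕌 : Set (Fin nu → ℝ)) (X : Set (Fin nx → ℝ))
    (L : (Fin nx → ℝ) → (Fin nu → ℝ) → ℝ) (M : (Fin nx → ℝ) → EReal)
    (N : ℕ) (x0 : Fin nx → ℝ) : EReal :=
  sInf {c : EReal | ∃ (xs : ℕ → (Fin nx → ℝ)) (us : ℕ → (Fin nu → ℝ)),
    xs 0 = x0 ∧
    (∀ k < N, us k ∈ 𝕌 ∧ xs k ∈ X ∧ xs (k + 1) = A *ᵥ xs k + B *ᵥ us k) ∧
    c = ((∑ k ∈ Finset.range N, L (xs k) (us k) : ℝ) : EReal) + M (xs N)}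

def Dij {nx nu f : ℕ} (G : Matrix (Fin f) (Fin nx) ℝ)
    (𝔻 : Set (Matrix (Fin nx) (Fin nx) ℝ × Matrix (Fin nx) (Fin nu) ℝ × (Fin nx → ℝ)))
    (xi : Fin nx → ℝ) (c : Fin nu → ℝ) (j : Fin f) : ℝ :=
  sSup ((fun d : Matrix (Fin nx) (Fin nx) ℝ × Matrix (Fin nx) (Fin nu) ℝ × (Fin nx → ℝ) =>
    (G *ᵥ (d.1 *ᵥ xi + d.2.1 *ᵥ c + d.2.2)) j) '' 𝔻)

lemma continuous_mulVec_apply {nx f : ℕ} (G : Matrix (Fin f) (Fin nx) ℝ) (i : Fin f) :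
    Continuous fun x : Fin nx → ℝ => (G *ᵥ x) i := by
  simp only [Matrix.mulVec, dotProduct]
  exact continuous_finset_sum _ fun j _ => continuous_const.mul (continuous_apply j)

lemma isClosed_Pset {nx f : ℕ} (G : Matrix (Fin f) (Fin nx) ℝ) (h z : Fin f → ℝ) :
    IsClosed (Pset G h z) := by
  have hE : Pset G h z = ⋂ i, {p : (Fin nx → ℝ) × ℝ | (G *ᵥ p.1) i + h i * p.2 ≤ z i} := by
    ext p; simp [Pset]
  rw [hE]
  exact isClosed_iInter fun i => isClosed_le
    (((continuous_mulVec_apply G i).comp continuous_fst).add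
      (continuous_const.mul continuous_snd)) continuous_const

lemma convex_Pset {nx f : ℕ} (G : Matrix (Fin f) (Fin nx) ℝ) (h z : Fin f → ℝ) :
    Convex ℝ (Pset G h z) := by
  intro p hp q hq a b ha hb hab i
  have h1 := hp i
  have h2 := hq i
  have e1 : (G *ᵥ (a • p + b • q).1) i = a * (G *ᵥ p.1) i + b * (G *ᵥ q.1) i := by
    simp [Matrix.mulVec_add, Matrix.mulVec_smul, smul_eq_mul]
  have e2 : (a • p + b • q).2 = a * p.2 + b * q.2 := by simp [smul_eq_mul]
  rw [e1, e2]
  have hz : a * z i + b * z i = z i := by rw [← add_mul, hab, one_mul]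
  nlinarith [mul_le_mul_of_nonneg_left h1 ha, mul_le_mul_of_nonneg_left h2 hb, hz]

lemma eq_of_epi_eq {nx : ℕ} (M₁ M₂ : (Fin nx → ℝ) → EReal)
    (h₁ : ∀ x, M₁ x ≠ ⊥) (h₂ : ∀ x, M₂ x ≠ ⊥)
    (he : epiF M₁ = epiF M₂) : M₁ = M₂ := by
  have key : ∀ M : (Fin nx → ℝ) → EReal, (∀ x, M x ≠ ⊥) → ∀ x,
      M x = sInf ((fun y : ℝ => (y : EReal)) '' {y | (x, y) ∈ epiF M}) := by
    intro M hM x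
    rcases eq_or_ne (M x) ⊤ with hx | hx
    · have hE : {y : ℝ | (x, y) ∈ epiF M} = ∅ := by
        ext y
        simp [epiF, hx, top_le_iff]
      simp [hE, hx]
    · have hcr : ((M x).toReal : EReal) = M x := EReal.coe_toReal hx (hM x)
      apply le_antisymm
      · refine le_sInf ?_
        rintro c ⟨y, hy, rfl⟩
        exact hy
      · exact sInf_le ⟨(M x).toReal, by simp [epiF, hcr], hcr⟩
  funext x
  rw [key M₁ h₁ x, key M₂ h₂ x, he]

lemma compact_D {nx f : ℕ} (f1 : ℕ) (G : Matrix (Fin f) (Fin nx) ℝ) (z : Fin f → ℝ)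
    (hG1 : ∀ x : Fin nx → ℝ, (∀ i : Fin f, (i : ℕ) < f1 → (G *ᵥ x) i ≤ 0) → x = 0) :
    IsCompact {x : Fin nx → ℝ | ∀ i : Fin f, (i : ℕ) < f1 → (G *ᵥ x) i ≤ z i} := by
  have hclosed : IsClosed {x : Fin nx → ℝ | ∀ i : Fin f, (i : ℕ) < f1 → (G *ᵥ x) i ≤ z i} := by
    have hE : {x : Fin nx → ℝ | ∀ i : Fin f, (i : ℕ) < f1 → (G *ᵥ x) i ≤ z i}
        = ⋂ i : Fin f, ⋂ (_ : (i : ℕ) < f1), {x : Fin nx → ℝ | (G *ᵥ x) i ≤ z i} := by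
      ext x; simp only [Set.mem_iInter, Set.mem_setOf_eq]
    rw [hE]
    exact isClosed_iInter fun i => isClosed_iInter fun _ =>
      isClosed_le (continuous_mulVec_apply G i) continuous_const
  rcases Nat.eq_zero_or_pos nx with hnx | hnx
  · subst hnx
    exact Set.subsingleton_of_subsingleton.isCompact
  -- nx > 0
  classical
  set S1 : Finset (Fin f) := Finset.univ.filter fun i : Fin f => (i : ℕ) < f1 with hS1
  set g : (Fin nx → ℝ) → ℝ := fun x => ∑ i ∈ S1, max ((G *ᵥ x) i) 0 with hg
  have hgcont : Continuous g :=
    continuous_finset_sum _ fun i _ => (continuous_mulVec_apply G i).max continuous_const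
  have hg0 : ∀ x, 0 ≤ g x := fun x =>
    Finset.sum_nonneg fun i _ => le_max_right _ _
  have hgzero : ∀ x, g x = 0 → x = 0 := by
    intro x hx
    apply hG1
    intro i hi
    have hiS : i ∈ S1 := by simp [hS1, hi]
    have := (Finset.sum_eq_zero_iff_of_nonneg fun j _ => le_max_right ((G *ᵥ x) j) 0).mp hx i hiS
    exact max_eq_right_iff.mp this
  have hhom : ∀ (t : ℝ), 0 ≤ t → ∀ x, g (t • x) = t * g x := by
    intro t ht x
    rw [hg]
    simp only
    rw [Finset.mul_sum]
    refine Finset.sum_congr rfl fun i _ => ?_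
    rw [Matrix.mulVec_smul]
    have : (t • (G *ᵥ x)) i = t * (G *ᵥ x) i := rfl
    rw [this, mul_max_of_nonneg _ _ ht, mul_zero]
  -- sphere min
  have hnonempty : ∃ u : Fin nx → ℝ, ‖u‖ = 1 := by
    set x0 : Fin nx → ℝ := fun _ => 1 with hx0
    have hx0ne : x0 ≠ 0 := by
      intro hh
      have := congrFun hh ⟨0, hnx⟩
      simp [hx0] at this
    have hx0pos : 0 < ‖x0‖ := norm_pos_iff.mpr hx0ne
    refine ⟨‖x0‖⁻¹ • x0, ?_⟩
    rw [norm_smul, norm_inv, norm_norm, inv_mul_cancel₀ hx0pos.ne']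
  obtain ⟨u0, hu0⟩ := hnonempty
  have hu0mem : u0 ∈ Metric.sphere (0 : Fin nx → ℝ) 1 := by
    simp [mem_sphere_iff_norm, hu0]
  obtain ⟨u, humem, hmin⟩ :=
    (isCompact_sphere (0 : Fin nx → ℝ) 1).exists_isMinOn ⟨u0, hu0mem⟩ hgcont.continuousOn
  have hunorm : ‖u‖ = 1 := by simpa [mem_sphere_iff_norm] using humem
  have hgu : 0 < g u := by
    rcases lt_or_eq_of_le (hg0 u) with hlt | heq
    · exact hlt
    · exfalso
      have : u = 0 := hgzero u heq.symm
      rw [this, norm_zero] at hunorm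
      norm_num at hunorm
  set Z : ℝ := ∑ i ∈ S1, max (z i) 0 with hZ
  have hbound : ∀ x ∈ {x : Fin nx → ℝ | ∀ i : Fin f, (i : ℕ) < f1 → (G *ᵥ x) i ≤ z i},
      ‖x‖ ≤ Z / g u := by
    intro x hx
    rcases eq_or_ne x 0 with rfl | hxne
    · rw [norm_zero]
      apply div_nonneg _ hgu.le
      exact Finset.sum_nonneg fun i _ => le_max_right _ _
    · have hxpos : 0 < ‖x‖ := norm_pos_iff.mpr hxne
      have hvmem : ‖x‖⁻¹ • x ∈ Metric.sphere (0 : Fin nx → ℝ) 1 := by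
        simp [mem_sphere_iff_norm, norm_smul, norm_inv, norm_norm,
          inv_mul_cancel₀ hxpos.ne']
      have h1 : g u ≤ g (‖x‖⁻¹ • x) := hmin hvmem
      rw [hhom _ (by positivity) x] at h1
      have hgxZ : g x ≤ Z := by
        refine Finset.sum_le_sum fun i hiS => ?_
        have hi : (i : ℕ) < f1 := by simpa [hS1] using hiS
        exact max_le_max (hx i hi) le_rfl
      rw [le_div_iff₀ hgu]
      have : g u * ‖x‖ ≤ g x := by
        have := mul_le_mul_of_nonneg_right h1 hxpos.le
        calc g u * ‖x‖ ≤ ‖x‖⁻¹ * g x * ‖x‖ := this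
          _ = g x := by field_simp
      nlinarith
  have hbdd : Bornology.IsBounded
      {x : Fin nx → ℝ | ∀ i : Fin f, (i : ℕ) < f1 → (G *ᵥ x) i ≤ z i} := by
    apply (Metric.isBounded_closedBall (x := (0 : Fin nx → ℝ)) (r := Z / g u)).subset
    intro x hx
    simpa [Metric.mem_closedBall, dist_zero_right] using hbound x hx
  exact Metric.isCompact_of_isClosed_isBounded hclosed hbdd


/-- Proposition 1: under the block-structure assumptions on
`F = (G h)`, if `P(z)` is non-empty then there is a unique proper compact
convex function `M` with `epi(M) = P(z)`. -/
theorem stmt_0 {nx f : ℕ} (f1 : ℕ)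
    (G : Matrix (Fin f) (Fin nx) ℝ) (h : Fin f → ℝ)
    (hf1 : f1 < f)
    (hzero : ∀ i : Fin f, (i : ℕ) < f1 → h i = 0)
    (hneg : ∀ i : Fin f, f1 ≤ (i : ℕ) → h i < 0)
    (hG1 : ∀ x : Fin nx → ℝ, (∀ i : Fin f, (i : ℕ) < f1 → (G *ᵥ x) i ≤ 0) → x = 0)
    (z : Fin f → ℝ) (hne : (Pset G h z).Nonempty) :
    ∃! M : (Fin nx → ℝ) → EReal,
      ProperCompactConvex M ∧ epiF M = Pset G h z := by
  classical
  set D : Set (Fin nx → ℝ) := {x | ∀ i : Fin f, (i : ℕ) < f1 → (G *ᵥ x) i ≤ z i} with hD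
  have hS2 : (Finset.univ.filter fun i : Fin f => f1 ≤ (i : ℕ)).Nonempty :=
    ⟨⟨f1, hf1⟩, by simp⟩
  set m : (Fin nx → ℝ) → ℝ := fun x =>
    (Finset.univ.filter fun i : Fin f => f1 ≤ (i : ℕ)).sup' hS2
      fun i => (z i - (G *ᵥ x) i) / h i with hm
  set M : (Fin nx → ℝ) → EReal := fun x => if x ∈ D then ((m x : ℝ) : EReal) else ⊤ with hM
  have hnotbot : ∀ x, M x ≠ ⊥ := by
    intro x
    rw [hM]
    by_cases hx : x ∈ D <;> simp [hx]
  have hepi : epiF M = Pset G h z := by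
    ext ⟨x, y⟩
    simp only [epiF, Pset, Set.mem_setOf_eq]
    constructor
    · intro hle i
      by_cases hx : x ∈ D
      · rw [hM] at hle
        simp only [if_pos hx] at hle
        have hmy : m x ≤ y := by exact_mod_cast hle
        by_cases hi : (i : ℕ) < f1
        · rw [hzero i hi]
          have := hx i hi
          linarith
        · push_neg at hi
          have hiS : i ∈ Finset.univ.filter fun j : Fin f => f1 ≤ (j : ℕ) := by simp [hi]
          rw [hm] at hmy
          have h1 : (z i - (G *ᵥ x) i) / h i ≤ y :=
            le_trans (Finset.le_sup' (fun j => (z j - (G *ᵥ x) j) / h j) hiS) hmy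
          rw [div_le_iff_of_neg (hneg i hi)] at h1
          linarith
      · rw [hM] at hle
        simp only [if_neg hx] at hle
        exact absurd hle (not_le.mpr (EReal.coe_lt_top y))
    · intro hp
      have hx : x ∈ D := by
        intro i hi
        have := hp i
        rw [hzero i hi] at this
        linarith
      rw [hM]
      simp only [if_pos hx]
      have hmy : m x ≤ y := by
        rw [hm]
        apply Finset.sup'_le
        intro i hiS
        have hi : f1 ≤ (i : ℕ) := by simpa using hiS
        rw [div_le_iff_of_neg (hneg i hi)]
        have := hp i
        linarith
      exact_mod_cast hmy
  have hdom : domF M = D := by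
    ext x
    simp only [domF, Set.mem_setOf_eq, hM]
    by_cases hx : x ∈ D <;> simp [hx]
  refine ⟨M, ⟨⟨hnotbot, ?_, ?_, ?_, ?_⟩, hepi⟩, ?_⟩
  · rw [hdom]
    obtain ⟨⟨x, y⟩, hp⟩ := hne
    refine ⟨x, fun i hi => ?_⟩
    have := hp i
    rw [hzero i hi] at this
    linarith
  · rw [hdom, hD]
    exact compact_D f1 G z hG1
  · rw [hepi]; exact isClosed_Pset G h z
  · rw [hepi]; exact convex_Pset G h z
  · rintro M' ⟨hpcc', hepi'⟩
    exact eq_of_epi_eq M' M hpcc'.1 hnotbot (hepi'.trans hepi.symm)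
end
end

section
/- Let 𝕌 ⊆ ℝ^{n_u} be closed and convex, let L : ℝ^{n_x}×ℝ^{n_u} → ℝ be convex and non-negative, let A ∈ ℝ^{n_x×n_x}, let B ∈ ℝ^{n_x×n_u} have rank(B) = n_u, and let M : ℝ^{n_x} → ℝ ∪ {∞} be a proper compact convex function. Then for every x ∈ ℝ^{n_x} such that there exists u ∈ 𝕌 with Ax + Bu ∈ dom(M), the infimum inf_{u∈𝕌} [ L(x,u) + M(Ax + Bu) ] is finite and attained by some u⋆ ∈ 𝕌. -/
open Matrix Set MeasureTheory
open scoped Classical Pointwise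

noncomputable section

/-! Since `rank B = n_u`, the affine map `u ↦ Ax + Bu` is injective, hence a closed embedding,
so the `u ∈ 𝕌` at which `L(x,u) + M(Ax + Bu)` is finite form a nonempty compact set. The
objective is lower semicontinuous (`L` is convex, hence continuous, in finite dimension, and `M`
has a closed epigraph), so it attains its minimum on that set; elsewhere on `𝕌` it is `⊤`. -/

lemma lowerSemicontinuous_of_isClosed_real_epigraph {α : Type*} [TopologicalSpace α]
    {f : α → EReal} (hepi : IsClosed {p : α × ℝ | f p.1 ≤ p.2}) :
    LowerSemicontinuous f := by
  intro a c hc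
  obtain ⟨r, hcr, hra⟩ := EReal.exists_between_coe_real hc
  have hopen : IsOpen {b : α | f b ≤ r}ᶜ :=
    (hepi.preimage (Continuous.prodMk_left r)).isOpen_compl
  filter_upwards [hopen.mem_nhds (not_le.2 hra)] with b hb
  exact hcr.trans (not_le.1 hb)

lemma LowerSemicontinuous.exists_isMinOn_of_isCompact_lt_top {α : Type*} [TopologicalSpace α]
    {f : α → EReal} (hf : LowerSemicontinuous f) {s : Set α}
    (hK : IsCompact (s ∩ {a | f a < ⊤})) (hne : (s ∩ {a | f a < ⊤}).Nonempty) :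
    ∃ a ∈ s, f a < ⊤ ∧ IsMinOn f s a := by
  obtain ⟨a, ⟨has, hatop⟩, hmin⟩ := hf.lowerSemicontinuousOn _ |>.exists_isMinOn hne hK
  refine ⟨a, has, hatop, fun b hbs => ?_⟩
  rcases eq_top_or_lt_top (f b) with hbtop | hbtop
  · simp [hbtop]
  · exact hmin ⟨hbs, hbtop⟩

lemma LowerSemicontinuous.coe_real_add {α : Type*} [TopologicalSpace α] {g : α → ℝ}
    {f : α → EReal} (hg : Continuous g) (hf : LowerSemicontinuous f) :
    LowerSemicontinuous fun a => (g a : EReal) + f a :=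
  (continuous_coe_real_ereal.comp hg).lowerSemicontinuous.add' hf
    fun _ => EReal.continuousAt_add (Or.inl (EReal.coe_ne_top _)) (Or.inl (EReal.coe_ne_bot _))

lemma Matrix.mulVec_injective_of_rank_eq_card {K m n : Type*} [Field K] [Fintype n]
    {B : Matrix m n K} (hB : B.rank = Fintype.card n) : Function.Injective B.mulVec := by
  have hsum := LinearMap.finrank_range_add_finrank_ker B.mulVecLin
  rw [← Matrix.rank, hB, Module.finrank_fintype_fun_eq_card, add_eq_left,
    Submodule.finrank_eq_zero] at hsum
  exact LinearMap.ker_eq_bot.1 hsum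

lemma Matrix.isCompact_preimage_add_mulVec {m n : Type*} [Fintype m] [Fintype n]
    {B : Matrix m n ℝ} (hB : Function.Injective B.mulVec) (c : m → ℝ) {K : Set (m → ℝ)}
    (hK : IsCompact K) : IsCompact ((fun u => c + B *ᵥ u) ⁻¹' K) := by
  have hBemb : Topology.IsClosedEmbedding B.mulVec :=
    LinearMap.isClosedEmbedding_of_injective (f := B.mulVecLin) (LinearMap.ker_eq_bot.2 hB)
  exact ((Homeomorph.addLeft c).isClosedEmbedding.comp hBemb).isCompact_preimage hK

theorem stmt_8_general {nx nu : ℕ}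
    (𝕌 : Set (Fin nu → ℝ)) (hUcl : IsClosed 𝕌)
    (L : (Fin nx → ℝ) → (Fin nu → ℝ) → ℝ)
    (hLcv : ConvexOn ℝ Set.univ (fun p : (Fin nx → ℝ) × (Fin nu → ℝ) => L p.1 p.2))
    (A : Matrix (Fin nx) (Fin nx) ℝ) (B : Matrix (Fin nx) (Fin nu) ℝ)
    (hB : B.rank = nu)
    (M : (Fin nx → ℝ) → EReal) (hM : ProperCompactConvex M)
    (x : Fin nx → ℝ)
    (hfeas : ∃ u ∈ 𝕌, A *ᵥ x + B *ᵥ u ∈ domF M) :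
    ∃ ustar ∈ 𝕌, ∃ r : ℝ,
      (L x ustar : EReal) + M (A *ᵥ x + B *ᵥ ustar) = (r : EReal) ∧
      (∀ u ∈ 𝕌, (r : EReal) ≤ (L x u : EReal) + M (A *ᵥ x + B *ᵥ u)) := by
  obtain ⟨hbot, -, hdom, hepi, -⟩ := hM
  set T : (Fin nu → ℝ) → (Fin nx → ℝ) := fun u => A *ᵥ x + B *ᵥ u
  set φ : (Fin nu → ℝ) → EReal := fun u => (L x u : EReal) + M (T u)
  have hφdom : {u | φ u < ⊤} = T ⁻¹' domF M := by
    ext u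
    simp only [mem_ofPred_eq, mem_preimage, domF, φ, lt_top_iff_ne_top]
    exact EReal.add_ne_top_iff_ne_top_right (EReal.coe_ne_bot _) (EReal.coe_ne_top _)
  have hLcont : Continuous fun u => L x u :=
    (continuousOn_univ.1 (hLcv.continuousOn isOpen_univ)).comp (Continuous.prodMk_right x)
  have hMlsc : LowerSemicontinuous M := lowerSemicontinuous_of_isClosed_real_epigraph hepi
  have hTcont : Continuous T :=
    continuous_const.add (Continuous.matrix_mulVec continuous_const continuous_id)
  have hφlsc : LowerSemicontinuous φ := hMlsc.comp hTcont |>.coe_real_add hLcont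
  have hK : IsCompact (𝕌 ∩ {u | φ u < ⊤}) := by
    rw [hφdom]
    exact (Matrix.isCompact_preimage_add_mulVec
      (Matrix.mulVec_injective_of_rank_eq_card (by simpa using hB)) _ hdom).inter_left hUcl
  obtain ⟨ustar, hustar, hφtop, hmin⟩ :=
    hφlsc.exists_isMinOn_of_isCompact_lt_top hK (by rwa [hφdom])
  have hφbot : φ ustar ≠ ⊥ := EReal.add_ne_bot_iff.2 ⟨EReal.coe_ne_bot _, hbot _⟩
  lift φ ustar to ℝ using ⟨hφtop.ne, hφbot⟩ with r hr
  exact ⟨ustar, hustar, r, hr.symm, fun u hu => hr ▸ hmin hu⟩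

/-- Footnote 3: for every `x` such that some admissible `u`
renders `Ax + Bu ∈ dom(M)`, the infimum `inf_{u ∈ 𝕌} [L(x,u) + M(Ax + Bu)]`
is finite and attained by some `u⋆ ∈ 𝕌`. -/
theorem stmt_8 {nx nu : ℕ}
    (𝕌 : Set (Fin nu → ℝ)) (hUcl : IsClosed 𝕌) (hUcv : Convex ℝ 𝕌)
    (L : (Fin nx → ℝ) → (Fin nu → ℝ) → ℝ)
    (hLcv : ConvexOn ℝ Set.univ (fun p : (Fin nx → ℝ) × (Fin nu → ℝ) => L p.1 p.2))
    (hLnn : ∀ x u, 0 ≤ L x u)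
    (A : Matrix (Fin nx) (Fin nx) ℝ) (B : Matrix (Fin nx) (Fin nu) ℝ)
    (hB : B.rank = nu)
    (M : (Fin nx → ℝ) → EReal) (hM : ProperCompactConvex M)
    (x : Fin nx → ℝ)
    (hfeas : ∃ u ∈ 𝕌, A *ᵥ x + B *ᵥ u ∈ domF M) :
    ∃ ustar ∈ 𝕌, ∃ r : ℝ,
      (L x ustar : EReal) + M (A *ᵥ x + B *ᵥ ustar) = (r : EReal) ∧
      (∀ u ∈ 𝕌, (r : EReal) ≤ (L x u : EReal) + M (A *ᵥ x + B *ᵥ u)) :=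
  stmt_8_general 𝕌 hUcl L hLcv A B hB M hM x hfeas
end
end

section
/- Let n = n_x + 1 and let M : ℝ^{n_x} → ℝ ∪ {∞} be a proper compact convex function whose epigraph admits the vertex representation epi(M) = conv(v_1,…,v_m) ⊕ K_n with finitely many points v_i = (r_i, s_i) ∈ ℝ^{n_x}×ℝ, where K_n = {(0,…,0,θ)ᵀ : θ ≥ 0} and ⊕ denotes the Minkowski sum. Let f : ℝ^{n_x} → ℝ ∪ {∞} be convex. Then M(x) ≥ f(x) holds for all x ∈ ℝ^{n_x} if and only if s_i ≥ f(r_i) holds for all i ∈ {1,…,m}. -/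
open Matrix Set MeasureTheory
open scoped Classical Pointwise

noncomputable section

/-- Part I of the proof of Theorem 1: for a proper compact
convex `M` whose epigraph has the vertex representation
`epi(M) = conv(v₁,…,vₘ) ⊕ Kₙ` with `vᵢ = (rᵢ, sᵢ)`, and a convex function
`f : ℝⁿˣ → ℝ ∪ {∞}` (convexity encoded by the convexity of its epigraph),
the inequality `M ≥ f` holds everywhere iff `sᵢ ≥ f(rᵢ)` for all `i`. -/
theorem stmt_9 {nx m : ℕ}
    (M : (Fin nx → ℝ) → EReal) (hM : ProperCompactConvex M)
    (r : Fin m → (Fin nx → ℝ)) (s : Fin m → ℝ)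
    (hrep : epiF M =
      convexHull ℝ (Set.range fun i : Fin m => ((r i, s i) : (Fin nx → ℝ) × ℝ))
        + Kcone nx)
    (f : (Fin nx → ℝ) → EReal)
    (hfbot : ∀ x, f x ≠ ⊥)
    (hfcv : Convex ℝ (epiF f)) :
    (∀ x, f x ≤ M x) ↔ (∀ i, f (r i) ≤ (s i : EReal)) := by
  constructor
  · intro hle i
    have hmem : ((r i, s i) : (Fin nx → ℝ) × ℝ) ∈ epiF M := by
      rw [hrep]
      exact ⟨(r i, s i), subset_convexHull ℝ _ ⟨i, rfl⟩, (0, 0), ⟨rfl, le_refl 0⟩, by simp⟩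
    exact (hle (r i)).trans hmem
  · intro hs x
    by_cases htop : M x = ⊤
    · simp [htop]
    · have hbot := hM.1 x
      have hx : ((M x).toReal : EReal) = M x := EReal.coe_toReal htop hbot
      have hmem : (x, (M x).toReal) ∈ epiF M := by
        simp only [epiF, Set.mem_setOf_eq, hx, le_refl]
      rw [hrep] at hmem
      obtain ⟨p, hp, k, hk, hpk⟩ := hmem
      have hpf : p ∈ epiF f := by
        refine convexHull_min ?_ hfcv hp
        rintro q ⟨i, rfl⟩
        exact hs i
      have h1 : p.1 + k.1 = x := congrArg Prod.fst hpk
      have h2 : p.2 + k.2 = (M x).toReal := congrArg Prod.snd hpk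
      have hx1 : p.1 = x := by rw [hk.1] at h1; simpa using h1
      have hp2 : p.2 ≤ (M x).toReal := by linarith [hk.2]
      calc f x = f p.1 := by rw [hx1]
        _ ≤ (p.2 : EReal) := hpf
        _ ≤ ((M x).toReal : EReal) := EReal.coe_le_coe_iff.mpr hp2
        _ = M x := hx
end
end

section
/- Consider the constrained linear system x_{k+1} = A x_k + B u_k with closed convex sets 𝕏 ⊆ ℝ^{n_x}, 𝕌 ⊆ ℝ^{n_u}, (0,0) ∈ 𝕏 × 𝕌, rank(B) = n_u ≤ n_x, and a stage cost L : ℝ^{n_x}×ℝ^{n_u} → ℝ that is convex, non-negative, L(0,0) = 0, and positive definite. Let X ⊆ 𝕏 be a compact convex λ-control invariant set with 0 ∈ X and 0 ≤ λ < 1. For an L-CLF M with dom(M) = X and N ∈ ℕ, define the finite horizon cost J_N^M(x_0) := inf { Σ_{k=0}^{N−1} L(x_k,u_k) + M(x_N) : u_k ∈ 𝕌, x_{k+1} = A x_k + B u_k, x_k ∈ X for k ∈ {0,…,N−1} } (with inf over the empty set equal to +∞). Then for every such M and every N ∈ ℕ: (a) J_N^M is itself an L-CLF with dom(J_N^M)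 = X, and (b) J_{N+1}^M(x) ≤ J_N^M(x) for all x ∈ ℝ^{n_x}. -/
open Matrix Set MeasureTheory
open scoped Classical Pointwise

noncomputable section

section AuxCLF

open Filter

variable {nx nu : ℕ}
  {A : Matrix (Fin nx) (Fin nx) ℝ} {B : Matrix (Fin nx) (Fin nu) ℝ}
  {𝕏 : Set (Fin nx → ℝ)} {𝕌 : Set (Fin nu → ℝ)}
  {L : (Fin nx → ℝ) → (Fin nu → ℝ) → ℝ}
  {X : Set (Fin nx → ℝ)} {M : (Fin nx → ℝ) → EReal}

private lemma eps_le {a : EReal} {b : ℝ} (h : ∀ ε : ℝ, 0 < ε → a ≤ (b : EReal) + (ε : EReal)) :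
    a ≤ (b : EReal) := by
  induction a using EReal.rec with
  | bot => exact bot_le
  | coe a =>
    refine EReal.coe_le_coe_iff.mpr ?_
    by_contra hab
    push_neg at hab
    have h2 := h ((a - b) / 2) (by linarith)
    rw [← EReal.coe_add, EReal.coe_le_coe_iff] at h2
    linarith
  | top =>
    have h2 := h 1 one_pos
    rw [← EReal.coe_add] at h2
    exact absurd h2 (EReal.coe_lt_top (b + 1)).not_ge

private lemma Mnonneg (hM : IsLCLF A B 𝕏 𝕌 L M) : ∀ x, 0 ≤ M x := fun x => by
  by_cases hx : x = 0
  · rw [hx, hM.1]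
  · exact (hM.2.1 x hx).le

private lemma Mne_bot (hM : IsLCLF A B 𝕏 𝕌 L M) (x : Fin nx → ℝ) : M x ≠ ⊥ :=
  ((lt_of_lt_of_le (by simp : (⊥ : EReal) < 0) (Mnonneg hM x))).ne'

private lemma Jcost_le_traj {N : ℕ} {x0 : Fin nx → ℝ} (xs : ℕ → Fin nx → ℝ)
    (us : ℕ → Fin nu → ℝ) (h0 : xs 0 = x0)
    (h : ∀ k < N, us k ∈ 𝕌 ∧ xs k ∈ X ∧ xs (k + 1) = A *ᵥ xs k + B *ᵥ us k) :
    Jcost A B 𝕌 X L M N x0 ≤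
      ((∑ k ∈ Finset.range N, L (xs k) (us k) : ℝ) : EReal) + M (xs N) :=
  sInf_le ⟨xs, us, h0, h, rfl⟩

private lemma Jcost_nonneg (hLnn : ∀ x u, 0 ≤ L x u) (hMnn : ∀ x, 0 ≤ M x)
    (N : ℕ) (x : Fin nx → ℝ) : 0 ≤ Jcost A B 𝕌 X L M N x := by
  refine le_sInf fun c hc => ?_
  obtain ⟨xs, us, -, -, rfl⟩ := hc
  refine add_nonneg ?_ (hMnn _)
  exact_mod_cast Finset.sum_nonneg fun k _ => hLnn _ _

private lemma Jcost_zero (x : Fin nx → ℝ) : Jcost A B 𝕌 X L M 0 x = M x := by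
  refine le_antisymm ?_ (le_sInf fun c hc => ?_)
  · have h := Jcost_le_traj (A := A) (B := B) (𝕌 := 𝕌) (X := X) (L := L) (M := M)
      (fun _ => x) (fun _ => 0) rfl (fun k hk => absurd hk k.not_lt_zero)
    simpa using h
  · obtain ⟨xs, us, h0, -, rfl⟩ := hc
    simp [h0]

private lemma mem_of_Mlt (hdom : domF M = X) {x : Fin nx → ℝ} (h : M x < ⊤) : x ∈ X :=
  hdom ▸ h

private lemma Mlt_of_mem (hdom : domF M = X) {x : Fin nx → ℝ} (h : x ∈ X) : M x < ⊤ := by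
  rw [← hdom] at h; exact h

private lemma exists_step (hXcv2 : Convex ℝ X) (h0 : (0 : Fin nx → ℝ) ∈ X) {lam : ℝ}
    (hlam0 : 0 ≤ lam) (hlam1 : lam < 1)
    (hCI : ∀ x ∈ X, ∃ u ∈ 𝕌, A *ᵥ x + B *ᵥ u ∈ lam • X) :
    ∀ x ∈ X, ∃ u ∈ 𝕌, A *ᵥ x + B *ᵥ u ∈ X := by
  intro x hx
  obtain ⟨u, hu, hmem⟩ := hCI x hx
  obtain ⟨y, hy, hEq⟩ := hmem
  refine ⟨u, hu, ?_⟩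
  rw [← hEq]
  have h := hXcv2 hy h0 hlam0 (by linarith : (0:ℝ) ≤ 1 - lam) (by ring)
  simpa using h

private lemma exists_traj (hstep : ∀ x ∈ X, ∃ u ∈ 𝕌, A *ᵥ x + B *ᵥ u ∈ X)
    {x : Fin nx → ℝ} (hx : x ∈ X) :
    ∃ (xs : ℕ → Fin nx → ℝ) (us : ℕ → Fin nu → ℝ), xs 0 = x ∧
      ∀ k, xs k ∈ X ∧ us k ∈ 𝕌 ∧ xs (k + 1) = A *ᵥ xs k + B *ᵥ us k := by
  classical
  let g : (Fin nx → ℝ) → (Fin nu → ℝ) := fun y =>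
    if h : y ∈ X then (hstep y h).choose else 0
  let xs : ℕ → Fin nx → ℝ := fun k => Nat.rec x (fun _ y => A *ᵥ y + B *ᵥ g y) k
  have hg : ∀ y (hy : y ∈ X), g y = (hstep y hy).choose := fun y hy => dif_pos hy
  have hX : ∀ k, xs k ∈ X := by
    intro k
    induction k with
    | zero => exact hx
    | succ k ih =>
      show A *ᵥ xs k + B *ᵥ g (xs k) ∈ X
      rw [hg (xs k) ih]
      exact (hstep (xs k) ih).choose_spec.2
  refine ⟨xs, fun k => g (xs k), rfl, fun k => ⟨hX k, ?_, rfl⟩⟩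
  show g (xs k) ∈ 𝕌
  rw [hg (xs k) (hX k)]
  exact (hstep (xs k) (hX k)).choose_spec.1

private lemma Jcost_lt_top (hstep : ∀ x ∈ X, ∃ u ∈ 𝕌, A *ᵥ x + B *ᵥ u ∈ X)
    (hdom : domF M = X) {N : ℕ} {x : Fin nx → ℝ} (hx : x ∈ X) :
    Jcost A B 𝕌 X L M N x < ⊤ := by
  obtain ⟨xs, us, h0, hk⟩ := exists_traj hstep hx
  refine lt_of_le_of_lt
    (Jcost_le_traj xs us h0 fun k _ => ⟨(hk k).2.1, (hk k).1, (hk k).2.2⟩) ?_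
  exact EReal.add_lt_top (by simp) (Mlt_of_mem hdom (hk N).1).ne

private lemma Jcost_dom (hstep : ∀ x ∈ X, ∃ u ∈ 𝕌, A *ᵥ x + B *ᵥ u ∈ X)
    (hdom : domF M = X) (N : ℕ) : domF (Jcost A B 𝕌 X L M N) = X := by
  ext x
  constructor
  · intro hx
    simp only [domF, Set.mem_setOf_eq, Jcost] at hx
    obtain ⟨c, hc, hlt⟩ := sInf_lt_iff.mp hx
    obtain ⟨xs, us, h0, hcon, rfl⟩ := hc
    cases N with
    | zero =>
      refine mem_of_Mlt hdom ?_
      rw [← h0]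
      refine lt_of_le_of_lt ?_ hlt
      simp
    | succ n => exact h0 ▸ (hcon 0 (Nat.succ_pos n)).2.1
  · intro hx
    exact Jcost_lt_top (L := L) hstep hdom hx

private lemma Jcost_mono (hM : IsLCLF A B 𝕏 𝕌 L M) (hdom : domF M = X)
    (hXsub : X ⊆ 𝕏) (N : ℕ) (x : Fin nx → ℝ) :
    Jcost A B 𝕌 X L M (N + 1) x ≤ Jcost A B 𝕌 X L M N x := by
  classical
  have hMnn : ∀ y, 0 ≤ M y := Mnonneg hM
  refine le_sInf fun c hc => ?_
  obtain ⟨xs, us, h0, hcon, rfl⟩ := hc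
  rcases eq_top_or_lt_top (M (xs N)) with hMt | hMfin
  · rw [hMt]
    simp
  · have hxN : xs N ∈ X := mem_of_Mlt hdom hMfin
    have hMb : M (xs N) ≠ ⊥ := Mne_bot hM _
    set s := ∑ k ∈ Finset.range N, L (xs k) (us k) with hs
    set a := (M (xs N)).toReal with ha
    have haM : (a : EReal) = M (xs N) := EReal.coe_toReal hMfin.ne hMb
    rw [← haM, ← EReal.coe_add]
    refine eps_le fun ε hε => ?_
    rw [← EReal.coe_add]
    have hclf := hM.2.2.2 (xs N)
    have hlt : (⨅ u ∈ 𝕌, ((L (xs N) u : EReal) + indE 𝕏 (xs N) + M (A *ᵥ xs N + B *ᵥ u)))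
        < ((a + ε : ℝ) : EReal) := by
      refine lt_of_le_of_lt hclf ?_
      rw [← haM]
      exact_mod_cast (by linarith : a < a + ε)
    obtain ⟨u, hu⟩ := iInf_lt_iff.mp hlt
    have hu𝕌 : u ∈ 𝕌 := by
      by_contra hun
      rw [iInf_neg hun] at hu
      exact absurd hu not_top_lt
    rw [iInf_pos hu𝕌] at hu
    have hind : indE 𝕏 (xs N) = 0 := if_pos (hXsub hxN)
    rw [hind, add_zero] at hu
    have hnt : M (A *ᵥ xs N + B *ᵥ u) ≠ ⊤ := by
      intro h
      rw [h] at hu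
      simp at hu
    have hnb : M (A *ᵥ xs N + B *ᵥ u) ≠ ⊥ := Mne_bot hM _
    set b := (M (A *ᵥ xs N + B *ᵥ u)).toReal with hb
    have hbM : (b : EReal) = M (A *ᵥ xs N + B *ᵥ u) := EReal.coe_toReal hnt hnb
    rw [← hbM, ← EReal.coe_add, EReal.coe_lt_coe_iff] at hu
    set xs' : ℕ → Fin nx → ℝ := fun k =>
      if k = N + 1 then A *ᵥ xs N + B *ᵥ u else xs k with hxs'
    set us' : ℕ → Fin nu → ℝ := fun k => if k = N then u else us k with hus'
    have h00 : xs' 0 = x := by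
      rw [show xs' 0 = xs 0 from if_neg (by omega), h0]
    have hfeas : ∀ k < N + 1, us' k ∈ 𝕌 ∧ xs' k ∈ X ∧
        xs' (k + 1) = A *ᵥ xs' k + B *ᵥ us' k := by
      intro k hk
      rcases Nat.lt_succ_iff_lt_or_eq.mp hk with hk' | rfl
      · have e1 : xs' k = xs k := if_neg (by omega)
        have e2 : xs' (k + 1) = xs (k + 1) := if_neg (by omega)
        have e3 : us' k = us k := if_neg (by omega)
        rw [e1, e2, e3]
        exact hcon k hk'
      · have e1 : xs' k = xs k := if_neg (by omega)
        have e2 : us' k = u := if_pos rfl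
        have e3 : xs' (k + 1) = A *ᵥ xs k + B *ᵥ u := if_pos rfl
        rw [e1, e2, e3]
        exact ⟨hu𝕌, hxN, rfl⟩
    have key := Jcost_le_traj (L := L) (M := M) xs' us' h00 hfeas
    have hsum : ∑ k ∈ Finset.range (N + 1), L (xs' k) (us' k) = s + L (xs N) u := by
      rw [Finset.sum_range_succ]
      congr 1
      · refine Finset.sum_congr rfl fun k hk => ?_
        have hkN : k < N := Finset.mem_range.mp hk
        rw [show xs' k = xs k from if_neg (by omega),
          show us' k = us k from if_neg (by omega)]
      · rw [show xs' N = xs N from if_neg (by omega), show us' N = u from if_pos rfl]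
    have hterm : xs' (N + 1) = A *ᵥ xs N + B *ᵥ u := if_pos rfl
    rw [hsum, hterm, ← hbM, ← EReal.coe_add] at key
    refine key.trans ?_
    exact_mod_cast (by linarith : s + L (xs N) u + b ≤ s + a + ε)

private lemma Jcost_le_M (hM : IsLCLF A B 𝕏 𝕌 L M) (hdom : domF M = X)
    (hXsub : X ⊆ 𝕏) : ∀ N x, Jcost A B 𝕌 X L M N x ≤ M x := by
  intro N
  induction N with
  | zero => intro x; rw [Jcost_zero]
  | succ n ih => intro x; exact (Jcost_mono hM hdom hXsub n x).trans (ih x)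

private lemma Lcont
    (hLcv : ConvexOn ℝ Set.univ (fun p : (Fin nx → ℝ) × (Fin nu → ℝ) => L p.1 p.2)) :
    Continuous (fun p : (Fin nx → ℝ) × (Fin nu → ℝ) => L p.1 p.2) :=
  continuousOn_univ.mp (hLcv.continuousOn isOpen_univ)

private lemma Lscale
    (hLcv : ConvexOn ℝ Set.univ (fun p : (Fin nx → ℝ) × (Fin nu → ℝ) => L p.1 p.2))
    (hL0 : L 0 0 = 0) (p : (Fin nx → ℝ) × (Fin nu → ℝ)) {t : ℝ}
    (h0 : 0 ≤ t) (h1 : t ≤ 1) :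
    L (t • p.1) (t • p.2) ≤ t * L p.1 p.2 := by
  have h := hLcv.2 (Set.mem_univ p) (Set.mem_univ (0 : (Fin nx → ℝ) × (Fin nu → ℝ)))
    h0 (by linarith : (0:ℝ) ≤ 1 - t) (by ring)
  simpa [hL0] using h

private lemma Lcoer
    (hLcv : ConvexOn ℝ Set.univ (fun p : (Fin nx → ℝ) × (Fin nu → ℝ) => L p.1 p.2))
    (hLnn : ∀ x u, 0 ≤ L x u) (hL0 : L 0 0 = 0)
    (hLpd : ∀ x u, ¬(x = 0 ∧ u = 0) → 0 < L x u) {r : ℝ} (hr : 0 < r) :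
    ∃ δ > 0, ∀ (x : Fin nx → ℝ) (u : Fin nu → ℝ), r ≤ ‖(x, u)‖ →
      δ * (‖(x, u)‖ / r) ≤ L x u := by
  have hc := Lcont hLcv
  by_cases hsp : (Metric.sphere (0 : (Fin nx → ℝ) × (Fin nu → ℝ)) r).Nonempty
  · obtain ⟨p0, hp0, hmin⟩ := (isCompact_sphere _ _).exists_isMinOn hsp hc.continuousOn
    have hp0r : ‖p0‖ = r := by simpa using hp0
    have hδ : 0 < L p0.1 p0.2 := by
      refine hLpd _ _ ?_
      rintro ⟨e1, e2⟩
      have hp00 : p0 = 0 := Prod.ext_iff.mpr ⟨e1, e2⟩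
      rw [hp00, norm_zero] at hp0r
      linarith
    refine ⟨L p0.1 p0.2, hδ, fun x u hru => ?_⟩
    set p : (Fin nx → ℝ) × (Fin nu → ℝ) := (x, u) with hp
    have hpn : 0 < ‖p‖ := lt_of_lt_of_le hr hru
    set t := r / ‖p‖ with ht
    have ht0 : 0 < t := div_pos hr hpn
    have ht1 : t ≤ 1 := by rw [div_le_one hpn]; exact hru
    have hmem : t • p ∈ Metric.sphere (0 : (Fin nx → ℝ) × (Fin nu → ℝ)) r := by
      rw [mem_sphere_zero_iff_norm, norm_smul, Real.norm_eq_abs, abs_of_pos ht0, ht]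
      field_simp
    have h1 : L p0.1 p0.2 ≤ L (t • p.1) (t • p.2) := isMinOn_iff.mp hmin _ hmem
    have h2 : L (t • p.1) (t • p.2) ≤ t * L x u := Lscale hLcv hL0 p ht0.le ht1
    have h3 : L p0.1 p0.2 ≤ t * L x u := h1.trans h2
    have h4 : ‖p‖ / r = 1 / t := by rw [ht, one_div_div]
    rw [h4, mul_one_div, div_le_iff₀ ht0]
    nlinarith
  · refine ⟨1, one_pos, fun x u hru => ?_⟩
    exfalso
    apply hsp
    have hpn : 0 < ‖((x, u) : (Fin nx → ℝ) × (Fin nu → ℝ))‖ := lt_of_lt_of_le hr hru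
    refine ⟨(r / ‖((x, u) : (Fin nx → ℝ) × (Fin nu → ℝ))‖) •
      ((x, u) : (Fin nx → ℝ) × (Fin nu → ℝ)), ?_⟩
    rw [mem_sphere_zero_iff_norm, norm_smul, Real.norm_eq_abs,
      abs_of_pos (div_pos hr hpn)]
    field_simp

private lemma Jepi_convex (hUcv : Convex ℝ 𝕌) (hXcv2 : Convex ℝ X)
    (hLcv : ConvexOn ℝ Set.univ (fun p : (Fin nx → ℝ) × (Fin nu → ℝ) => L p.1 p.2))
    (hMnn : ∀ x, 0 ≤ M x) (hMepi : Convex ℝ (epiF M)) (N : ℕ) :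
    Convex ℝ (epiF (Jcost A B 𝕌 X L M N)) := by
  rintro ⟨x1, r1⟩ h1 ⟨x2, r2⟩ h2 θ1 θ2 hθ1 hθ2 hθ
  simp only [epiF, Set.mem_setOf_eq] at h1 h2
  show Jcost A B 𝕌 X L M N (θ1 • x1 + θ2 • x2) ≤ ((θ1 * r1 + θ2 * r2 : ℝ) : EReal)
  refine eps_le fun ε hε => ?_
  rw [← EReal.coe_add]
  have hlt1 : Jcost A B 𝕌 X L M N x1 < ((r1 + ε : ℝ) : EReal) :=
    lt_of_le_of_lt h1 (EReal.coe_lt_coe_iff.mpr (by linarith))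
  have hlt2 : Jcost A B 𝕌 X L M N x2 < ((r2 + ε : ℝ) : EReal) :=
    lt_of_le_of_lt h2 (EReal.coe_lt_coe_iff.mpr (by linarith))
  obtain ⟨c1, hmem1, hc1⟩ := sInf_lt_iff.mp hlt1
  obtain ⟨c2, hmem2, hc2⟩ := sInf_lt_iff.mp hlt2
  obtain ⟨xs1, us1, h01, hcon1, rfl⟩ := hmem1
  obtain ⟨xs2, us2, h02, hcon2, rfl⟩ := hmem2
  set s1 := ∑ k ∈ Finset.range N, L (xs1 k) (us1 k) with hs1
  set s2 := ∑ k ∈ Finset.range N, L (xs2 k) (us2 k) with hs2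
  have hM1t : M (xs1 N) ≠ ⊤ := by intro h; rw [h] at hc1; simp at hc1
  have hM2t : M (xs2 N) ≠ ⊤ := by intro h; rw [h] at hc2; simp at hc2
  have hM1b : M (xs1 N) ≠ ⊥ := ((lt_of_lt_of_le (by simp : (⊥:EReal) < 0) (hMnn _))).ne'
  have hM2b : M (xs2 N) ≠ ⊥ := ((lt_of_lt_of_le (by simp : (⊥:EReal) < 0) (hMnn _))).ne'
  set m1 := (M (xs1 N)).toReal with hm1
  set m2 := (M (xs2 N)).toReal with hm2
  have hm1M : (m1 : EReal) = M (xs1 N) := EReal.coe_toReal hM1t hM1b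
  have hm2M : (m2 : EReal) = M (xs2 N) := EReal.coe_toReal hM2t hM2b
  rw [← hm1M, ← EReal.coe_add, EReal.coe_lt_coe_iff] at hc1
  rw [← hm2M, ← EReal.coe_add, EReal.coe_lt_coe_iff] at hc2
  set xs : ℕ → Fin nx → ℝ := fun k => θ1 • xs1 k + θ2 • xs2 k with hxs
  set us : ℕ → Fin nu → ℝ := fun k => θ1 • us1 k + θ2 • us2 k with hus
  have h00 : xs 0 = θ1 • x1 + θ2 • x2 := by rw [hxs]; simp only []; rw [h01, h02]
  have hfeas : ∀ k < N, us k ∈ 𝕌 ∧ xs k ∈ X ∧ xs (k + 1) = A *ᵥ xs k + B *ᵥ us k := by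
    intro k hk
    refine ⟨hUcv (hcon1 k hk).1 (hcon2 k hk).1 hθ1 hθ2 hθ,
      hXcv2 (hcon1 k hk).2.1 (hcon2 k hk).2.1 hθ1 hθ2 hθ, ?_⟩
    show θ1 • xs1 (k+1) + θ2 • xs2 (k+1) = _
    rw [(hcon1 k hk).2.2, (hcon2 k hk).2.2]
    show _ = A *ᵥ (θ1 • xs1 k + θ2 • xs2 k) + B *ᵥ (θ1 • us1 k + θ2 • us2 k)
    rw [Matrix.mulVec_add, Matrix.mulVec_smul, Matrix.mulVec_smul,
      Matrix.mulVec_add, Matrix.mulVec_smul, Matrix.mulVec_smul,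
      smul_add, smul_add]
    abel
  have key := Jcost_le_traj (L := L) (M := M) xs us h00 hfeas
  have hsum : ∑ k ∈ Finset.range N, L (xs k) (us k) ≤ θ1 * s1 + θ2 * s2 := by
    calc ∑ k ∈ Finset.range N, L (xs k) (us k)
        ≤ ∑ k ∈ Finset.range N, (θ1 * L (xs1 k) (us1 k) + θ2 * L (xs2 k) (us2 k)) := by
          refine Finset.sum_le_sum fun k _ => ?_
          exact hLcv.2 (Set.mem_univ (xs1 k, us1 k)) (Set.mem_univ (xs2 k, us2 k)) hθ1 hθ2 hθ
      _ = θ1 * s1 + θ2 * s2 := by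
          rw [Finset.sum_add_distrib, ← Finset.mul_sum, ← Finset.mul_sum]
  have hMcomb : M (xs N) ≤ ((θ1 * m1 + θ2 * m2 : ℝ) : EReal) := by
    have hmem1 : ((xs1 N, m1) : (Fin nx → ℝ) × ℝ) ∈ epiF M := hm1M.ge
    have hmem2 : ((xs2 N, m2) : (Fin nx → ℝ) × ℝ) ∈ epiF M := hm2M.ge
    have h := hMepi hmem1 hmem2 hθ1 hθ2 hθ
    exact h
  refine key.trans ?_
  calc ((∑ k ∈ Finset.range N, L (xs k) (us k) : ℝ) : EReal) + M (xs N)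
      ≤ ((θ1 * s1 + θ2 * s2 : ℝ) : EReal) + ((θ1 * m1 + θ2 * m2 : ℝ) : EReal) :=
        add_le_add (EReal.coe_le_coe_iff.mpr hsum) hMcomb
    _ = (((θ1 * s1 + θ2 * s2) + (θ1 * m1 + θ2 * m2) : ℝ) : EReal) := by
        norm_cast
    _ ≤ ((θ1 * r1 + θ2 * r2 + ε : ℝ) : EReal) := by
        refine EReal.coe_le_coe_iff.mpr ?_
        nlinarith

private lemma Jepi_closed (hUcl : IsClosed 𝕌) (hXcomp : IsCompact X)
    (hLcv : ConvexOn ℝ Set.univ (fun p : (Fin nx → ℝ) × (Fin nu → ℝ) => L p.1 p.2))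
    (hLnn : ∀ x u, 0 ≤ L x u) (hL0 : L 0 0 = 0)
    (hLpd : ∀ x u, ¬(x = 0 ∧ u = 0) → 0 < L x u)
    (hMnn : ∀ x, 0 ≤ M x) (hMepi : IsClosed (epiF M)) (hdom : domF M = X) (N : ℕ) :
    IsClosed (epiF (Jcost A B 𝕌 X L M N)) := by
  classical
  have hXcl : IsClosed X := hXcomp.isClosed
  have hLc : Continuous (fun p : (Fin nx → ℝ) × (Fin nu → ℝ) => L p.1 p.2) := Lcont hLcv
  obtain ⟨δ, hδ, hcoer⟩ := Lcoer hLcv hLnn hL0 hLpd one_pos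
  refine IsSeqClosed.isClosed ?_
  intro p q hp hq
  simp only [epiF, Set.mem_setOf_eq] at hp ⊢
  have hx : Tendsto (fun n => (p n).1) atTop (nhds q.1) := (continuous_fst.tendsto q).comp hq
  have hr : Tendsto (fun n => (p n).2) atTop (nhds q.2) := (continuous_snd.tendsto q).comp hq
  obtain ⟨R, hR⟩ := hr.bddAbove_range
  have hRn : ∀ n, (p n).2 ≤ R := fun n => hR ⟨n, rfl⟩
  have hex : ∀ n : ℕ, ∃ (xs : ℕ → Fin nx → ℝ) (us : ℕ → Fin nu → ℝ),
      xs 0 = (p n).1 ∧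
      (∀ k < N, us k ∈ 𝕌 ∧ xs k ∈ X ∧ xs (k + 1) = A *ᵥ xs k + B *ᵥ us k) ∧
      M (xs N) ≠ ⊤ ∧
      (∑ k ∈ Finset.range N, L (xs k) (us k)) + (M (xs N)).toReal
        ≤ (p n).2 + 1 / ((n : ℝ) + 1) := by
    intro n
    have hpos : (0:ℝ) < 1 / ((n : ℝ) + 1) := by positivity
    have hlt : Jcost A B 𝕌 X L M N (p n).1 < (((p n).2 + 1 / ((n : ℝ) + 1) : ℝ) : EReal) :=
      lt_of_le_of_lt (hp n) (EReal.coe_lt_coe_iff.mpr (by linarith))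
    obtain ⟨c, hmem, hc⟩ := sInf_lt_iff.mp hlt
    obtain ⟨xs, us, h0, hcon, rfl⟩ := hmem
    have hMt : M (xs N) ≠ ⊤ := by intro h; rw [h] at hc; simp at hc
    have hMb : M (xs N) ≠ ⊥ := ((lt_of_lt_of_le (by simp : (⊥:EReal) < 0) (hMnn _))).ne'
    refine ⟨xs, us, h0, hcon, hMt, ?_⟩
    rw [← EReal.coe_toReal hMt hMb, ← EReal.coe_add, EReal.coe_lt_coe_iff] at hc
    exact hc.le
  choose xs us h0 hcon hMt hble using hex
  have hsnn : ∀ n, 0 ≤ ∑ k ∈ Finset.range N, L (xs n k) (us n k) :=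
    fun n => Finset.sum_nonneg fun k _ => hLnn _ _
  have hmnn : ∀ n, 0 ≤ (M (xs n N)).toReal := by
    intro n
    have h := EReal.toReal_le_toReal (hMnn (xs n N)) (by simp) (hMt n)
    simpa using h
  have hC : ∀ n, (∑ k ∈ Finset.range N, L (xs n k) (us n k)) + (M (xs n N)).toReal
      ≤ R + 1 := by
    intro n
    refine (hble n).trans ?_
    have h1 : 1 / ((n:ℝ) + 1) ≤ 1 := by
      rw [div_le_one (by positivity)]
      linarith [Nat.cast_nonneg (α := ℝ) n]
    linarith [hRn n]
  have hLk : ∀ n, ∀ k < N, L (xs n k) (us n k) ≤ R + 1 := by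
    intro n k hk
    have h1 : L (xs n k) (us n k) ≤ ∑ j ∈ Finset.range N, L (xs n j) (us n j) :=
      Finset.single_le_sum (fun j _ => hLnn _ _) (Finset.mem_range.mpr hk)
    linarith [hC n, hmnn n]
  set ρ : ℝ := max 1 ((R + 1) / δ) with hρ
  have hubd : ∀ n, ∀ k < N, dist (us n k) (0 : Fin nu → ℝ) ≤ ρ := by
    intro n k hk
    rw [dist_zero_right]
    by_cases hball : ‖((xs n k, us n k) : (Fin nx → ℝ) × (Fin nu → ℝ))‖ ≤ 1
    · exact le_trans (le_trans (norm_snd_le ((xs n k, us n k) : (Fin nx → ℝ) × (Fin nu → ℝ))) hball) (le_max_left _ _)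
    · push_neg at hball
      have h1 := hcoer (xs n k) (us n k) hball.le
      rw [div_one] at h1
      have h2 : ‖((xs n k, us n k) : (Fin nx → ℝ) × (Fin nu → ℝ))‖ ≤ (R + 1) / δ := by
        rw [le_div_iff₀ hδ]
        calc ‖((xs n k, us n k) : (Fin nx → ℝ) × (Fin nu → ℝ))‖ * δ
            = δ * ‖((xs n k, us n k) : (Fin nx → ℝ) × (Fin nu → ℝ))‖ := mul_comm _ _
          _ ≤ L (xs n k) (us n k) := h1
          _ ≤ R + 1 := hLk n k hk
      exact le_trans (le_trans (norm_snd_le ((xs n k, us n k) : (Fin nx → ℝ) × (Fin nu → ℝ))) h2) (le_max_right _ _)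
  set P := (Set.univ.pi fun _ : Fin (N+1) => X) ×ˢ
    ((Set.univ.pi fun _ : Fin N => Metric.closedBall (0 : Fin nu → ℝ) ρ) ×ˢ
      Set.Icc (0:ℝ) (R+1)) with hP
  have hPc : IsCompact P :=
    (isCompact_univ_pi fun _ => hXcomp).prod
      ((isCompact_univ_pi fun _ => isCompact_closedBall _ _).prod isCompact_Icc)
  set sq : ℕ → (Fin (N+1) → (Fin nx → ℝ)) × ((Fin N → (Fin nu → ℝ)) × ℝ) :=
    fun n => (fun k => xs n (k : ℕ), (fun k => us n (k : ℕ), (M (xs n N)).toReal)) with hsq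
  have hXall : ∀ n, ∀ k : Fin (N+1), xs n (k : ℕ) ∈ X := by
    intro n k
    rcases lt_or_eq_of_le (Nat.lt_succ_iff.mp k.isLt) with hk | hk
    · exact (hcon n (k : ℕ) hk).2.1
    · rw [hk]
      exact mem_of_Mlt hdom (lt_top_iff_ne_top.mpr (hMt n))
  have hmem : ∀ n, sq n ∈ P := by
    intro n
    refine ⟨fun k _ => hXall n k, fun k _ => ?_, ⟨hmnn n, ?_⟩⟩
    · rw [Metric.mem_closedBall]
      exact hubd n (k : ℕ) k.isLt
    · linarith [hC n, hsnn n]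
  obtain ⟨a, haP, φ, hφ, hconv⟩ := hPc.tendsto_subseq hmem
  set xb : ℕ → Fin nx → ℝ := fun k => if h : k < N + 1 then a.1 ⟨k, h⟩ else 0 with hxbdef
  set ub : ℕ → Fin nu → ℝ := fun k => if h : k < N then a.2.1 ⟨k, h⟩ else 0 with hubdef
  have hxbk : ∀ (k : ℕ) (h : k < N + 1),
      Tendsto (fun n => xs (φ n) k) atTop (nhds (xb k)) := by
    intro k h
    have h1 : Tendsto (fun n => (sq (φ n)).1 ⟨k, h⟩) atTop (nhds (a.1 ⟨k, h⟩)) :=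
      (((continuous_apply (⟨k, h⟩ : Fin (N+1))).comp continuous_fst).tendsto a).comp hconv
    have h2 : xb k = a.1 ⟨k, h⟩ := dif_pos h
    rw [h2]
    exact h1
  have hubk : ∀ (k : ℕ) (h : k < N),
      Tendsto (fun n => us (φ n) k) atTop (nhds (ub k)) := by
    intro k h
    have h1 : Tendsto (fun n => (sq (φ n)).2.1 ⟨k, h⟩) atTop (nhds (a.2.1 ⟨k, h⟩)) :=
      (((continuous_apply (⟨k, h⟩ : Fin N)).comp
        (continuous_fst.comp continuous_snd)).tendsto a).comp hconv
    have h2 : ub k = a.2.1 ⟨k, h⟩ := dif_pos h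
    rw [h2]
    exact h1
  have hconvm : Tendsto (fun n => (M (xs (φ n) N)).toReal) atTop (nhds a.2.2) :=
    ((continuous_snd.comp continuous_snd).tendsto a).comp hconv
  have hfeas : ∀ k < N, ub k ∈ 𝕌 ∧ xb k ∈ X ∧ xb (k + 1) = A *ᵥ xb k + B *ᵥ ub k := by
    intro k hk
    have hk1 : k < N + 1 := by omega
    have hk2 : k + 1 < N + 1 := by omega
    refine ⟨?_, ?_, ?_⟩
    · exact hUcl.mem_of_tendsto (hubk k hk)
        (Eventually.of_forall fun n => (hcon (φ n) k hk).1)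
    · exact hXcl.mem_of_tendsto (hxbk k hk1)
        (Eventually.of_forall fun n => (hcon (φ n) k hk).2.1)
    · have hA : Continuous (fun v : Fin nx → ℝ => A *ᵥ v) :=
        A.mulVecLin.continuous_of_finiteDimensional
      have hB : Continuous (fun v : Fin nu → ℝ => B *ᵥ v) :=
        B.mulVecLin.continuous_of_finiteDimensional
      have hlim2 : Tendsto (fun n => xs (φ n) (k + 1)) atTop
          (nhds (A *ᵥ xb k + B *ᵥ ub k)) := by
        have h3 := ((hA.tendsto (xb k)).comp (hxbk k hk1)).add
          ((hB.tendsto (ub k)).comp (hubk k hk))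
        refine Tendsto.congr (fun n => ?_) h3
        exact ((hcon (φ n) k hk).2.2).symm
      exact tendsto_nhds_unique (hxbk (k + 1) hk2) hlim2
  have hxb0 : xb 0 = q.1 := by
    refine tendsto_nhds_unique (hxbk 0 (by omega)) ?_
    have h3 : Tendsto (fun n => (p (φ n)).1) atTop (nhds q.1) := hx.comp hφ.tendsto_atTop
    exact Tendsto.congr (fun n => (h0 (φ n)).symm) h3
  have key := Jcost_le_traj (L := L) (M := M) xb ub hxb0 hfeas
  have hsums : Tendsto (fun n => ∑ k ∈ Finset.range N, L (xs (φ n) k) (us (φ n) k)) atTop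
      (nhds (∑ k ∈ Finset.range N, L (xb k) (ub k))) := by
    refine tendsto_finset_sum _ fun k hk => ?_
    have hk' : k < N := Finset.mem_range.mp hk
    exact (hLc.tendsto (xb k, ub k)).comp ((hxbk k (by omega)).prodMk_nhds (hubk k hk'))
  have hMlim : M (xb N) ≤ (a.2.2 : EReal) := by
    have hmem' : ∀ n, ((xs (φ n) N, (M (xs (φ n) N)).toReal) : (Fin nx → ℝ) × ℝ) ∈ epiF M :=
      fun n => EReal.le_coe_toReal (hMt (φ n))
    have htend : Tendsto
        (fun n => ((xs (φ n) N, (M (xs (φ n) N)).toReal) : (Fin nx → ℝ) × ℝ))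
        atTop (nhds (xb N, a.2.2)) :=
      (hxbk N (by omega)).prodMk_nhds hconvm
    exact hMepi.mem_of_tendsto htend (Eventually.of_forall hmem')
  have hfin : (∑ k ∈ Finset.range N, L (xb k) (ub k)) + a.2.2 ≤ q.2 := by
    have h1 := hsums.add hconvm
    have h2 : Tendsto (fun n => (p (φ n)).2 + 1 / ((φ n : ℝ) + 1)) atTop (nhds (q.2 + 0)) :=
      Tendsto.add (hr.comp hφ.tendsto_atTop)
        (tendsto_one_div_add_atTop_nhds_zero_nat.comp hφ.tendsto_atTop)
    rw [add_zero] at h2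
    exact le_of_tendsto_of_tendsto' h1 h2 fun n => hble (φ n)
  refine key.trans ?_
  calc ((∑ k ∈ Finset.range N, L (xb k) (ub k) : ℝ) : EReal) + M (xb N)
      ≤ ((∑ k ∈ Finset.range N, L (xb k) (ub k) : ℝ) : EReal) + (a.2.2 : EReal) :=
        add_le_add le_rfl hMlim
    _ = ((∑ k ∈ Finset.range N, L (xb k) (ub k) + a.2.2 : ℝ) : EReal) := by norm_cast
    _ ≤ (q.2 : EReal) := EReal.coe_le_coe_iff.mpr hfin

private lemma Jcost_pos
    (hLcv : ConvexOn ℝ Set.univ (fun p : (Fin nx → ℝ) × (Fin nu → ℝ) => L p.1 p.2))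
    (hLnn : ∀ x u, 0 ≤ L x u) (hL0 : L 0 0 = 0)
    (hLpd : ∀ x u, ¬(x = 0 ∧ u = 0) → 0 < L x u)
    (hM : IsLCLF A B 𝕏 𝕌 L M) (N : ℕ) {x : Fin nx → ℝ} (hx : x ≠ 0) :
    0 < Jcost A B 𝕌 X L M N x := by
  have hMnn := Mnonneg hM
  cases N with
  | zero =>
    rw [Jcost_zero]
    exact hM.2.1 x hx
  | succ n =>
    by_cases hxX : x ∈ X
    · have hxn : 0 < dist x (0 : Fin nx → ℝ) := dist_pos.mpr hx
      obtain ⟨δ, hδ, hco⟩ := Lcoer hLcv hLnn hL0 hLpd hxn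
      refine lt_of_lt_of_le (show (0:EReal) < ((δ:ℝ):EReal) from EReal.coe_pos.mpr hδ)
        (le_sInf fun c hc => ?_)
      obtain ⟨xs, us, h0, hcon, rfl⟩ := hc
      have hge : dist x (0 : Fin nx → ℝ)
          ≤ ‖((xs 0, us 0) : (Fin nx → ℝ) × (Fin nu → ℝ))‖ := by
        rw [dist_zero_right, ← h0]
        exact norm_fst_le ((xs 0, us 0) : (Fin nx → ℝ) × (Fin nu → ℝ))
      have h1 := hco (xs 0) (us 0) hge
      have hrat : (1:ℝ) ≤ ‖((xs 0, us 0) : (Fin nx → ℝ) × (Fin nu → ℝ))‖ / dist x 0 :=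
        (one_le_div hxn).mpr hge
      have h2 : δ ≤ L (xs 0) (us 0) := by nlinarith
      have h3 : δ ≤ ∑ k ∈ Finset.range (n+1), L (xs k) (us k) :=
        h2.trans (Finset.single_le_sum (fun j _ => hLnn _ _)
          (Finset.mem_range.mpr (Nat.succ_pos n)))
      calc ((δ:ℝ):EReal) ≤ ((∑ k ∈ Finset.range (n+1), L (xs k) (us k) : ℝ) : EReal) :=
            EReal.coe_le_coe_iff.mpr h3
        _ ≤ _ := le_add_of_nonneg_right (hMnn _)
    · have htop : Jcost A B 𝕌 X L M (n+1) x = ⊤ := by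
        refine top_le_iff.mp (le_sInf fun c hc => ?_)
        obtain ⟨xs, us, h0, hcon, rfl⟩ := hc
        exact absurd (h0 ▸ (hcon 0 (Nat.succ_pos n)).2.1) hxX
      rw [htop]
      exact lt_of_lt_of_le (EReal.coe_pos.mpr one_pos) le_top

private lemma Jcost_clf (hM : IsLCLF A B 𝕏 𝕌 L M) (hdom : domF M = X) (hXsub : X ⊆ 𝕏)
    (N : ℕ) (x : Fin nx → ℝ) :
    (⨅ u ∈ 𝕌, ((L x u : EReal) + indE 𝕏 x + Jcost A B 𝕌 X L M N (A *ᵥ x + B *ᵥ u)))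
      ≤ Jcost A B 𝕌 X L M N x := by
  cases N with
  | zero =>
    have h := hM.2.2.2 x
    simp only [Jcost_zero]
    exact h
  | succ n =>
    refine le_sInf fun c hc => ?_
    obtain ⟨xs, us, h0, hcon, rfl⟩ := hc
    have h00 := hcon 0 (Nat.succ_pos n)
    have hxX : x ∈ X := h0 ▸ h00.2.1
    set ys : ℕ → Fin nx → ℝ := fun k => xs (k+1) with hys
    set vs : ℕ → Fin nu → ℝ := fun k => us (k+1) with hvs
    have htail : ∀ k < n, vs k ∈ 𝕌 ∧ ys k ∈ X ∧ ys (k+1) = A *ᵥ ys k + B *ᵥ vs k :=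
      fun k hk => hcon (k+1) (by omega)
    have hJn : Jcost A B 𝕌 X L M n (xs 1) ≤
        ((∑ k ∈ Finset.range n, L (ys k) (vs k) : ℝ) : EReal) + M (ys n) :=
      Jcost_le_traj (L := L) (M := M) ys vs rfl htail
    have hJn1 := (Jcost_mono hM hdom hXsub n (xs 1)).trans hJn
    have hbi : (⨅ u ∈ 𝕌, ((L x u : EReal) + indE 𝕏 x
          + Jcost A B 𝕌 X L M (n+1) (A *ᵥ x + B *ᵥ u)))
        ≤ (L x (us 0) : EReal) + indE 𝕏 x
          + Jcost A B 𝕌 X L M (n+1) (A *ᵥ x + B *ᵥ us 0) :=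
      iInf₂_le (us 0) h00.1
    refine hbi.trans ?_
    have hind : indE 𝕏 x = 0 := if_pos (hXsub hxX)
    have hdyn : A *ᵥ x + B *ᵥ us 0 = xs 1 := by rw [← h0]; exact h00.2.2.symm
    rw [hind, add_zero, hdyn]
    refine le_trans (add_le_add le_rfl hJn1) ?_
    have hsum : L x (us 0) + ∑ k ∈ Finset.range n, L (ys k) (vs k)
        = ∑ k ∈ Finset.range (n+1), L (xs k) (us k) := by
      rw [Finset.sum_range_succ', add_comm]
      congr 1
      rw [h0]
    calc (L x (us 0) : EReal)
        + (((∑ k ∈ Finset.range n, L (ys k) (vs k) : ℝ) : EReal) + M (ys n))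
        = ((∑ k ∈ Finset.range (n+1), L (xs k) (us k) : ℝ) : EReal) + M (xs (n+1)) := by
          rw [← add_assoc, ← EReal.coe_add, hsum]
      _ ≤ _ := le_rfl

end AuxCLF

/-- properties 1 and 2 of the finite horizon cost functions in
the proof of Lemma 1: `J_N^M` is an `L`-CLF with domain `X`, and the sequence
is pointwise non-increasing in `N`. -/
theorem stmt_11 {nx nu : ℕ}
    (A : Matrix (Fin nx) (Fin nx) ℝ) (B : Matrix (Fin nx) (Fin nu) ℝ)
    (𝕏 : Set (Fin nx → ℝ)) (𝕌 : Set (Fin nu → ℝ))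
    (hXcl : IsClosed 𝕏) (hXcv : Convex ℝ 𝕏)
    (hUcl : IsClosed 𝕌) (hUcv : Convex ℝ 𝕌)
    (h0X : (0 : Fin nx → ℝ) ∈ 𝕏) (h0U : (0 : Fin nu → ℝ) ∈ 𝕌)
    (hB : B.rank = nu) (hnu : nu ≤ nx)
    (L : (Fin nx → ℝ) → (Fin nu → ℝ) → ℝ)
    (hLcv : ConvexOn ℝ Set.univ (fun p : (Fin nx → ℝ) × (Fin nu → ℝ) => L p.1 p.2))
    (hLnn : ∀ x u, 0 ≤ L x u) (hL0 : L 0 0 = 0)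
    (hLpd : ∀ x u, ¬(x = 0 ∧ u = 0) → 0 < L x u)
    (X : Set (Fin nx → ℝ)) (hXsub : X ⊆ 𝕏) (hXcomp : IsCompact X)
    (hXcv2 : Convex ℝ X) (h0 : (0 : Fin nx → ℝ) ∈ X)
    (lam : ℝ) (hlam0 : 0 ≤ lam) (hlam1 : lam < 1)
    (hCI : ∀ x ∈ X, ∃ u ∈ 𝕌, A *ᵥ x + B *ᵥ u ∈ lam • X)
    (M : (Fin nx → ℝ) → EReal) (hM : IsLCLF A B 𝕏 𝕌 L M) (hdom : domF M = X)
    (N : ℕ) :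
    (IsLCLF A B 𝕏 𝕌 L (Jcost A B 𝕌 X L M N) ∧ domF (Jcost A B 𝕌 X L M N) = X) ∧
      ∀ x : Fin nx → ℝ, Jcost A B 𝕌 X L M (N + 1) x ≤ Jcost A B 𝕌 X L M N x := by
  have hstep : ∀ x ∈ X, ∃ u ∈ 𝕌, A *ᵥ x + B *ᵥ u ∈ X :=
    exists_step hXcv2 h0 hlam0 hlam1 hCI
  have hMnn : ∀ x, 0 ≤ M x := Mnonneg hM
  refine ⟨⟨⟨?_, ?_, ⟨?_, ?_, ?_, ?_, ?_⟩, ?_⟩, Jcost_dom hstep hdom N⟩,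
    Jcost_mono hM hdom hXsub N⟩
  · refine le_antisymm ?_ (Jcost_nonneg hLnn hMnn N 0)
    calc Jcost A B 𝕌 X L M N 0 ≤ M 0 := Jcost_le_M hM hdom hXsub N 0
      _ = 0 := hM.1
  · exact fun x hx => Jcost_pos hLcv hLnn hL0 hLpd hM N hx
  · exact fun x =>
      ((lt_of_lt_of_le (by simp : (⊥:EReal) < 0) (Jcost_nonneg hLnn hMnn N x))).ne'
  · exact ⟨0, by rw [Jcost_dom hstep hdom]; exact h0⟩
  · rw [Jcost_dom hstep hdom]; exact hXcomp
  · exact Jepi_closed hUcl hXcomp hLcv hLnn hL0 hLpd hMnn hM.2.2.1.2.2.2.1 hdom N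
  · exact Jepi_convex hUcv hXcv2 hLcv hMnn hM.2.2.1.2.2.2.2 N
  · exact Jcost_clf hM hdom hXsub N
end
end

section
/- Consider the constrained linear system x_{k+1} = A x_k + B u_k with closed convex sets 𝕏 ⊆ ℝ^{n_x}, 𝕌 ⊆ ℝ^{n_u}, (0,0) ∈ 𝕏 × 𝕌, rank(B) = n_u ≤ n_x, and a stage cost L : ℝ^{n_x}×ℝ^{n_u} → ℝ that is convex, non-negative, L(0,0) = 0, and positive definite. Let X ⊆ 𝕏 be a compact convex λ-control invariant set with 0 ∈ X and 0 ≤ λ < 1. Then there exists at least one L-CLF M with dom(M) = X, i.e., the set ℳ(X) is non-empty. -/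
open Matrix Set MeasureTheory
open scoped Classical Pointwise

noncomputable section

/-!
Take `M = c • γ` on `X` and `⊤` off `X`, where `γ` is the gauge of `X`. Because `B` is injective
and `X` is compact, the inputs realising `λ`-invariance can be chosen from a bounded set, so
their stage cost is bounded by some `K`. For `x ∈ X` write `x = γ x • x'` and use `γ x` times
the input of `x'`: the successor lies in `(γ x * λ) • X` and, `L` being convex with
`L 0 0 = 0`, the cost is at most `γ x * K`. Hence the Lyapunov inequality holds as soon as
`K ≤ c * (1 - λ)`. The epigraph of `M` is `X × ℝ` cut with the cone over `c⁻¹ • X`, which is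
closed and convex because `X` is compact and convex.
-/

section ConeOver

variable {E : Type*} [AddCommGroup E] [Module ℝ E] {X : Set E}

def coneOver (X : Set E) : Set (E × ℝ) := {p | 0 ≤ p.2 ∧ p.1 ∈ p.2 • X}

theorem Convex.coneOver (hX : Convex ℝ X) : Convex ℝ (coneOver X) := by
  rintro ⟨x₁, t₁⟩ ⟨ht₁, hx₁⟩ ⟨x₂, t₂⟩ ⟨ht₂, hx₂⟩ a b ha hb -
  refine ⟨by simp only [Prod.snd_add, Prod.smul_snd, smul_eq_mul]; positivity, ?_⟩
  simp only [Prod.fst_add, Prod.smul_fst, Prod.snd_add, Prod.smul_snd, smul_eq_mul,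
    hX.add_smul (mul_nonneg ha ht₁) (mul_nonneg hb ht₂), mul_smul]
  exact add_mem_add (smul_mem_smul_set hx₁) (smul_mem_smul_set hx₂)

theorem Convex.smul_set_subset_smul_set (hX : Convex ℝ X) (h0 : (0 : E) ∈ X) {s t : ℝ}
    (hs : 0 ≤ s) (hst : s ≤ t) : s • X ⊆ t • X := by
  calc s • X ⊆ s • X + (t - s) • X := subset_add_left _ (zero_mem_smul_set h0)
    _ = t • X := by rw [← hX.add_smul hs (sub_nonneg.2 hst), add_sub_cancel]

variable [TopologicalSpace E] [ContinuousSMul ℝ E] [T2Space E]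

/-- Near `p` the cone agrees with the compact image of `X × [0, p.2 + 1]` under
`(z, t) ↦ (t • z, t)`. -/
theorem IsCompact.isClosed_coneOver (hX : IsCompact X) : IsClosed (coneOver X) := by
  refine isClosed_of_closure_subset fun p hp => ?_
  set U : Set (E × ℝ) := {q | q.2 < p.2 + 1}
  set C := (fun q : E × ℝ => (q.2 • q.1, q.2)) '' (X ×ˢ Icc 0 (p.2 + 1))
  have hC : IsClosed C := ((hX.prod isCompact_Icc).image (by fun_prop)).isClosed
  have hUC : U ∩ coneOver X ⊆ C := by
    rintro ⟨x, t⟩ ⟨htT, ht, hx⟩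
    obtain ⟨z, hz, hzx⟩ := mem_smul_set.1 hx
    exact ⟨(z, t), ⟨hz, ht, le_of_lt htT⟩, Prod.ext hzx rfl⟩
  have hpU : p ∈ closure (U ∩ coneOver X) :=
    (isOpen_lt continuous_snd continuous_const).inter_closure ⟨lt_add_one p.2, hp⟩
  obtain ⟨⟨z, t⟩, ⟨hz, ht, -⟩, rfl⟩ := hC.closure_subset_iff.2 hUC hpU
  exact ⟨ht, smul_mem_smul_set hz⟩

/-- The infimum defining the gauge is attained: `{t | (x, t) ∈ coneOver X}` is closed. -/
theorem IsCompact.mem_gauge_smul (hX : IsCompact X) {x : E} (hx : x ∈ X) :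
    x ∈ gauge X x • X := by
  set T := {t : ℝ | (x, t) ∈ coneOver X}
  have hT : IsClosed T := hX.isClosed_coneOver.preimage (by fun_prop)
  have hT1 : (1 : ℝ) ∈ T := ⟨zero_le_one, by rwa [one_smul]⟩
  have hTbdd : BddBelow T := ⟨0, fun t ht => ht.1⟩
  have hinf : sInf T ∈ T := hT.csInf_mem ⟨1, hT1⟩ hTbdd
  have hgauge : gauge X x = sInf T := by
    refine le_antisymm (gauge_le_of_mem hinf.1 hinf.2) ?_
    rw [gauge_def]
    exact csInf_le_csInf hTbdd ⟨1, mem_Ioi.2 zero_lt_one, by rwa [one_smul]⟩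
      fun t ht => ⟨le_of_lt ht.1, ht.2⟩
  rw [hgauge]
  exact hinf.2

theorem IsCompact.eq_zero_of_gauge_eq_zero (hX : IsCompact X) {x : E} (hx : x ∈ X)
    (hgx : gauge X x = 0) : x = 0 := by
  obtain ⟨z, -, hz⟩ := mem_smul_set.1 (hX.mem_gauge_smul hx)
  rw [← hz, hgx, zero_smul]

theorem IsCompact.gauge_le_iff_mem_smul (hX : IsCompact X) (hXcv : Convex ℝ X)
    (h0 : (0 : E) ∈ X) {x : E} (hx : x ∈ X) {t : ℝ} (ht : 0 ≤ t) :
    gauge X x ≤ t ↔ x ∈ t • X :=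
  ⟨fun h => hXcv.smul_set_subset_smul_set h0 (gauge_nonneg x) h (hX.mem_gauge_smul hx),
    gauge_le_of_mem ht⟩

end ConeOver

section ScaledGauge

variable {n : ℕ} {X : Set (Fin n → ℝ)} {c : ℝ}

def scaledGaugeOn (X : Set (Fin n → ℝ)) (c : ℝ) (x : Fin n → ℝ) : EReal :=
  if x ∈ X then ((c * gauge X x : ℝ) : EReal) else ⊤

theorem scaledGaugeOn_of_mem {x : Fin n → ℝ} (hx : x ∈ X) :
    scaledGaugeOn X c x = ((c * gauge X x : ℝ) : EReal) :=
  if_pos hx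

theorem scaledGaugeOn_of_notMem {x : Fin n → ℝ} (hx : x ∉ X) : scaledGaugeOn X c x = ⊤ :=
  if_neg hx

theorem scaledGaugeOn_zero (h0 : (0 : Fin n → ℝ) ∈ X) : scaledGaugeOn X c 0 = 0 := by
  rw [scaledGaugeOn_of_mem h0, gauge_zero, mul_zero, EReal.coe_zero]

theorem scaledGaugeOn_pos (hX : IsCompact X) (hc : 0 < c) {x : Fin n → ℝ} (hx0 : x ≠ 0) :
    0 < scaledGaugeOn X c x := by
  by_cases hx : x ∈ X
  · have hg : 0 < gauge X x :=
      (gauge_nonneg x).lt_of_ne fun h => hx0 (hX.eq_zero_of_gauge_eq_zero hx h.symm)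
    rw [scaledGaugeOn_of_mem hx]
    exact EReal.coe_pos.2 (mul_pos hc hg)
  · rw [scaledGaugeOn_of_notMem hx]
    exact EReal.zero_lt_top

theorem domF_scaledGaugeOn : domF (scaledGaugeOn X c) = X := by
  ext x
  by_cases hx : x ∈ X
  · simp only [domF, mem_ofPred_eq, scaledGaugeOn_of_mem hx, EReal.coe_lt_top, hx]
  · simp [domF, scaledGaugeOn_of_notMem hx, hx]

theorem epiF_scaledGaugeOn (hX : IsCompact X) (hXcv : Convex ℝ X) (h0 : (0 : Fin n → ℝ) ∈ X)
    (hc : 0 < c) : epiF (scaledGaugeOn X c) = (X ×ˢ univ) ∩ coneOver (c⁻¹ • X) := by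
  ext ⟨x, y⟩
  by_cases hx : x ∈ X
  · have hcone : (x, y) ∈ coneOver (c⁻¹ • X) ↔ 0 ≤ y / c ∧ x ∈ (y / c) • X := by
      change 0 ≤ y ∧ x ∈ y • c⁻¹ • X ↔ _
      rw [smul_smul, ← div_eq_mul_inv, ← div_le_div_iff_of_pos_right hc, zero_div]
    simp only [epiF, mem_ofPred_eq, scaledGaugeOn_of_mem hx, EReal.coe_le_coe_iff, mem_inter_iff,
      mem_prod, hx, mem_univ, and_self, true_and, hcone, ← le_div_iff₀' hc]
    refine ⟨fun h => ?_, fun h => (hX.gauge_le_iff_mem_smul hXcv h0 hx h.1).2 h.2⟩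
    have hy : 0 ≤ y / c := (gauge_nonneg x).trans h
    exact ⟨hy, (hX.gauge_le_iff_mem_smul hXcv h0 hx hy).1 h⟩
  · simp [epiF, scaledGaugeOn_of_notMem hx, hx]

theorem properCompactConvex_scaledGaugeOn (hX : IsCompact X) (hXcv : Convex ℝ X)
    (h0 : (0 : Fin n → ℝ) ∈ X) (hc : 0 < c) : ProperCompactConvex (scaledGaugeOn X c) := by
  refine ⟨fun x => ?_, ?_, ?_, ?_, ?_⟩
  · unfold scaledGaugeOn
    split_ifs
    exacts [EReal.coe_ne_bot _, top_ne_bot]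
  · exact domF_scaledGaugeOn ▸ ⟨0, h0⟩
  · exact domF_scaledGaugeOn ▸ hX
  · rw [epiF_scaledGaugeOn hX hXcv h0 hc]
    exact (hX.isClosed.prod isClosed_univ).inter (hX.smul _).isClosed_coneOver
  · rw [epiF_scaledGaugeOn hX hXcv h0 hc]
    exact (hXcv.prod convex_univ).inter (hXcv.smul _).coneOver

end ScaledGauge

theorem Matrix.ker_mulVecLin_eq_bot_of_rank_eq {K : Type*} [Field K] {m n : ℕ}
    (B : Matrix (Fin m) (Fin n) K) (hB : B.rank = n) : LinearMap.ker B.mulVecLin = ⊥ := by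
  have h := LinearMap.finrank_range_add_finrank_ker B.mulVecLin
  rw [← Matrix.rank, hB, Module.finrank_fin_fun] at h
  exact Submodule.finrank_eq_zero.mp (by omega)

theorem ConvexOn.le_smul_of_map_zero {E : Type*} [AddCommGroup E] [Module ℝ E] {f : E → ℝ}
    (hf : ConvexOn ℝ univ f) (hf0 : f 0 = 0) {t : ℝ} (ht0 : 0 ≤ t) (ht1 : t ≤ 1) (x : E) :
    f (t • x) ≤ t * f x := by
  simpa [hf0] using hf.2 (mem_univ x) (mem_univ 0) ht0 (sub_nonneg.2 ht1) (add_sub_cancel t 1)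

section Control

variable {nx nu : ℕ} {A : Matrix (Fin nx) (Fin nx) ℝ} {B : Matrix (Fin nx) (Fin nu) ℝ}
  {𝕌 : Set (Fin nu → ℝ)} {L : (Fin nx → ℝ) → (Fin nu → ℝ) → ℝ} {X : Set (Fin nx → ℝ)}

theorem exists_control_cost_le {Y : Set (Fin nx → ℝ)} (hB : LinearMap.ker B.mulVecLin = ⊥)
    (hL : Continuous fun p : (Fin nx → ℝ) × (Fin nu → ℝ) => L p.1 p.2) (hX : IsCompact X)
    (hY : IsCompact Y) (hXY : ∀ x ∈ X, ∃ u ∈ 𝕌, A *ᵥ x + B *ᵥ u ∈ Y) :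
    ∃ K, ∀ x ∈ X, ∃ u ∈ 𝕌, A *ᵥ x + B *ᵥ u ∈ Y ∧ L x u ≤ K := by
  obtain ⟨k, -, hk⟩ := B.mulVecLin.exists_antilipschitzWith hB
  set V := B.mulVecLin ⁻¹' ((fun q : (Fin nx → ℝ) × (Fin nx → ℝ) => q.1 - A *ᵥ q.2) '' (Y ×ˢ X))
  have hV : Bornology.IsBounded V :=
    hk.isBounded_preimage ((hY.prod hX).image (by fun_prop)).isBounded
  obtain ⟨K, hK⟩ := (hX.prod hV.isCompact_closure).bddAbove_image hL.continuousOn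
  refine ⟨K, fun x hx => ?_⟩
  obtain ⟨u, hu, hxu⟩ := hXY x hx
  have huV : u ∈ V := ⟨(_, x), ⟨hxu, hx⟩, add_sub_cancel_left _ _⟩
  exact ⟨u, hu, hxu, hK ⟨(x, u), ⟨hx, subset_closure huV⟩, rfl⟩⟩

variable (hUcv : Convex ℝ 𝕌) (h0U : (0 : Fin nu → ℝ) ∈ 𝕌)
  (hLcv : ConvexOn ℝ univ (fun p : (Fin nx → ℝ) × (Fin nu → ℝ) => L p.1 p.2)) (hL0 : L 0 0 = 0)
  (hX : IsCompact X) (hXcv : Convex ℝ X) (h0 : (0 : Fin nx → ℝ) ∈ X)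
  {lam K c : ℝ} (hlam0 : 0 ≤ lam) (hlam1 : lam ≤ 1)
  (hK : ∀ x ∈ X, ∃ u ∈ 𝕌, A *ᵥ x + B *ᵥ u ∈ lam • X ∧ L x u ≤ K)
  (hc : 0 ≤ c) (hcK : K ≤ c * (1 - lam))
include hUcv h0U hLcv hL0 hX hXcv h0 hlam0 hlam1 hK hc hcK

theorem exists_control_gauge_decrease {x : Fin nx → ℝ} (hx : x ∈ X) :
    ∃ u ∈ 𝕌, A *ᵥ x + B *ᵥ u ∈ X ∧ L x u + c * gauge X (A *ᵥ x + B *ᵥ u) ≤ c * gauge X x := by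
  set g := gauge X x
  have hg0 : 0 ≤ g := gauge_nonneg x
  have hg1 : g ≤ 1 := gauge_le_one_of_mem hx
  obtain ⟨x', hx', hxx'⟩ := mem_smul_set.1 (hX.mem_gauge_smul hx)
  obtain ⟨u', hu', hxu', hLK⟩ := hK x' hx'
  obtain ⟨w, hw, hww⟩ := mem_smul_set.1 hxu'
  have hnext : A *ᵥ x + B *ᵥ (g • u') = (g * lam) • w := by
    rw [← hxx', mulVec_smul, mulVec_smul, ← smul_add, ← hww, smul_smul]
  have hgl0 : 0 ≤ g * lam := mul_nonneg hg0 hlam0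
  have hgl1 : g * lam ≤ 1 := mul_le_one₀ hg1 hlam0 hlam1
  have hcost : L x (g • u') ≤ g * K :=
    calc L x (g • u') = L (g • x') (g • u') := by rw [hxx']
      _ ≤ g * L x' u' := hLcv.le_smul_of_map_zero hL0 hg0 hg1 (x', u')
      _ ≤ g * K := mul_le_mul_of_nonneg_left hLK hg0
  have hgauge : gauge X ((g * lam) • w) ≤ g * lam := gauge_le_of_mem hgl0 (smul_mem_smul_set hw)
  refine ⟨g • u', hUcv.smul_mem_of_zero_mem h0U hu' ⟨hg0, hg1⟩,
    hnext ▸ hXcv.smul_mem_of_zero_mem h0 hw ⟨hgl0, hgl1⟩, ?_⟩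
  rw [hnext]
  nlinarith [mul_le_mul_of_nonneg_left hgauge hc, mul_le_mul_of_nonneg_left hcK hg0]

theorem scaledGaugeOn_decrease {𝕏 : Set (Fin nx → ℝ)} (hX𝕏 : X ⊆ 𝕏) (x : Fin nx → ℝ) :
    (⨅ u ∈ 𝕌, ((L x u : EReal) + indE 𝕏 x + scaledGaugeOn X c (A *ᵥ x + B *ᵥ u))) ≤
      scaledGaugeOn X c x := by
  by_cases hx : x ∈ X
  · obtain ⟨u, hu, hnext, hdec⟩ :=
      exists_control_gauge_decrease hUcv h0U hLcv hL0 hX hXcv h0 hlam0 hlam1 hK hc hcK hx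
    refine iInf₂_le_of_le u hu ?_
    rw [indE, if_pos (hX𝕏 hx), add_zero, scaledGaugeOn_of_mem hnext, scaledGaugeOn_of_mem hx,
      ← EReal.coe_add, EReal.coe_le_coe_iff]
    exact hdec
  · rw [scaledGaugeOn_of_notMem hx]
    exact le_top

end Control

theorem stmt_13_general {nx nu : ℕ}
    (A : Matrix (Fin nx) (Fin nx) ℝ) (B : Matrix (Fin nx) (Fin nu) ℝ)
    (𝕏 : Set (Fin nx → ℝ)) (𝕌 : Set (Fin nu → ℝ))
    (hUcv : Convex ℝ 𝕌) (h0U : (0 : Fin nu → ℝ) ∈ 𝕌) (hB : B.rank = nu)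
    (L : (Fin nx → ℝ) → (Fin nu → ℝ) → ℝ)
    (hLcv : ConvexOn ℝ Set.univ (fun p : (Fin nx → ℝ) × (Fin nu → ℝ) => L p.1 p.2))
    (hL0 : L 0 0 = 0)
    (X : Set (Fin nx → ℝ)) (hXsub : X ⊆ 𝕏) (hXcomp : IsCompact X)
    (hXcv2 : Convex ℝ X) (h0 : (0 : Fin nx → ℝ) ∈ X)
    (lam : ℝ) (hlam0 : 0 ≤ lam) (hlam1 : lam < 1)
    (hCI : ∀ x ∈ X, ∃ u ∈ 𝕌, A *ᵥ x + B *ᵥ u ∈ lam • X) :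
    ∃ M : (Fin nx → ℝ) → EReal, IsLCLF A B 𝕏 𝕌 L M ∧ domF M = X := by
  obtain ⟨K, hK⟩ := exists_control_cost_le (B.ker_mulVecLin_eq_bot_of_rank_eq hB)
    (continuousOn_univ.1 (hLcv.continuousOn isOpen_univ)) hXcomp (hXcomp.smul lam) hCI
  obtain ⟨c, hc, hcK⟩ : ∃ c > 0, K ≤ c * (1 - lam) :=
    ⟨max K 1 / (1 - lam), by have := sub_pos.2 hlam1; positivity,
      by rw [div_mul_cancel₀ _ (sub_pos.2 hlam1).ne']; exact le_max_left K 1⟩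
  refine ⟨scaledGaugeOn X c, ⟨scaledGaugeOn_zero h0, fun x hx => scaledGaugeOn_pos hXcomp hc hx,
    properCompactConvex_scaledGaugeOn hXcomp hXcv2 h0 hc, ?_⟩, domF_scaledGaugeOn⟩
  exact scaledGaugeOn_decrease hUcv h0U hLcv hL0 hXcomp hXcv2 h0 hlam0 hlam1.le hK hc.le hcK hXsub

/-- non-emptiness of `ℳ(X)` in the proof of Lemma 1: there
exists at least one `L`-CLF with domain `X`. -/
theorem stmt_13 {nx nu : ℕ}
    (A : Matrix (Fin nx) (Fin nx) ℝ) (B : Matrix (Fin nx) (Fin nu) ℝ)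
    (𝕏 : Set (Fin nx → ℝ)) (𝕌 : Set (Fin nu → ℝ))
    (hXcl : IsClosed 𝕏) (hXcv : Convex ℝ 𝕏)
    (hUcl : IsClosed 𝕌) (hUcv : Convex ℝ 𝕌)
    (h0X : (0 : Fin nx → ℝ) ∈ 𝕏) (h0U : (0 : Fin nu → ℝ) ∈ 𝕌)
    (hB : B.rank = nu) (hnu : nu ≤ nx)
    (L : (Fin nx → ℝ) → (Fin nu → ℝ) → ℝ)
    (hLcv : ConvexOn ℝ Set.univ (fun p : (Fin nx → ℝ) × (Fin nu → ℝ) => L p.1 p.2))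
    (hLnn : ∀ x u, 0 ≤ L x u) (hL0 : L 0 0 = 0)
    (hLpd : ∀ x u, ¬(x = 0 ∧ u = 0) → 0 < L x u)
    (X : Set (Fin nx → ℝ)) (hXsub : X ⊆ 𝕏) (hXcomp : IsCompact X)
    (hXcv2 : Convex ℝ X) (h0 : (0 : Fin nx → ℝ) ∈ X)
    (lam : ℝ) (hlam0 : 0 ≤ lam) (hlam1 : lam < 1)
    (hCI : ∀ x ∈ X, ∃ u ∈ 𝕌, A *ᵥ x + B *ᵥ u ∈ lam • X) :
    ∃ M : (Fin nx → ℝ) → EReal, IsLCLF A B 𝕏 𝕌 L M ∧ domF M = X :=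
  stmt_13_general A B 𝕏 𝕌 hUcv h0U hB L hLcv hL0 X hXsub hXcomp hXcv2 h0 lam hlam0 hlam1 hCI
end
end

section
/- Consider the uncertain linear system x_{k+1} = A_k x_k + B_k u_k + w_k with (A_k,B_k,w_k) ∈ 𝔻 for a non-empty, compact, convex set 𝔻 ⊆ ℝ^{n_x×n_x}×ℝ^{n_x×n_u}×ℝ^{n_x}, and let 𝕌 ⊆ ℝ^{n_u} be convex. Let X_s ⊆ 𝕏 be a compact convex RCI set, let λ ∈ [0,1), and let X ⊆ 𝕏 be a compact convex set that is robust λ-contractive relative to X_s. Define X_k := λ^k X ⊕ (1−λ^k) X_s for k ∈ ℕ. Then for every k ∈ ℕ and every x ∈ X_k there exists u ∈ 𝕌 such that A x + B u + w ∈ X_{k+1} for all (A,B,w) ∈ 𝔻. In particular, for every x_0 ∈ X there exist admissible controls keeping the state in λ^k X ⊕ (1−λ^k) X_s at every step k, regardless of the realization of the uncertainty. -/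
open Matrix Set MeasureTheory
open scoped Classical Pointwise

noncomputable section

/-!
If `x = λᵏ a + (1 - λᵏ) b` with `a ∈ X` and `b ∈ X_s`, the same convex combination of an input
steering `a` contractively and one keeping `b` in `X_s` works for `x`, because for each fixed
realization the dynamics are affine in the state-input pair. Convexity of `X_s` then merges
`λᵏ(1 - λ) X_s + (1 - λᵏ) X_s` into `(1 - λᵏ⁺¹) X_s`. Choosing such inputs at every step gives the
feedback law.
-/

def RobustlySteers {nx nu : ℕ}
    (𝔻 : Set (Matrix (Fin nx) (Fin nx) ℝ × Matrix (Fin nx) (Fin nu) ℝ × (Fin nx → ℝ)))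
    (𝕌 : Set (Fin nu → ℝ)) (S T : Set (Fin nx → ℝ)) : Prop :=
  ∀ x ∈ S, ∃ u ∈ 𝕌, ∀ d ∈ 𝔻, d.1 *ᵥ x + d.2.1 *ᵥ u + d.2.2 ∈ T

namespace RobustlySteers

variable {nx nu : ℕ}
  {𝔻 : Set (Matrix (Fin nx) (Fin nx) ℝ × Matrix (Fin nx) (Fin nu) ℝ × (Fin nx → ℝ))}
  {𝕌 : Set (Fin nu → ℝ)}

theorem smul_add_smul (hU : Convex ℝ 𝕌) {S S' T T' : Set (Fin nx → ℝ)}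
    (h : RobustlySteers 𝔻 𝕌 S T) (h' : RobustlySteers 𝔻 𝕌 S' T') {a b : ℝ}
    (ha : 0 ≤ a) (hb : 0 ≤ b) (hab : a + b = 1) :
    RobustlySteers 𝔻 𝕌 (a • S + b • S') (a • T + b • T') := by
  rintro _ ⟨_, ⟨x, hx, rfl⟩, _, ⟨x', hx', rfl⟩, rfl⟩
  obtain ⟨u, hu, hxu⟩ := h x hx
  obtain ⟨u', hu', hxu'⟩ := h' x' hx'
  refine ⟨a • u + b • u', hU hu hu' ha hb hab, fun d hd => ?_⟩
  have hsplit : d.1 *ᵥ (a • x + b • x') + d.2.1 *ᵥ (a • u + b • u') + d.2.2 =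
      a • (d.1 *ᵥ x + d.2.1 *ᵥ u + d.2.2) + b • (d.1 *ᵥ x' + d.2.1 *ᵥ u' + d.2.2) := by
    simp only [mulVec_add, mulVec_smul]
    linear_combination (norm := module) (-hab) • d.2.2
  rw [hsplit]
  exact add_mem_add (smul_mem_smul_set (hxu d hd)) (smul_mem_smul_set (hxu' d hd))

theorem exists_feedback {S : ℕ → Set (Fin nx → ℝ)}
    (h : ∀ k, RobustlySteers 𝔻 𝕌 (S k) (S (k + 1))) {x0 : Fin nx → ℝ} (hx0 : x0 ∈ S 0) :
    ∃ κ : ℕ → (Fin nx → ℝ) → (Fin nu → ℝ), (∀ k x, κ k x ∈ 𝕌) ∧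
      ∀ (xs : ℕ → (Fin nx → ℝ))
        (ds : ℕ → Matrix (Fin nx) (Fin nx) ℝ × Matrix (Fin nx) (Fin nu) ℝ × (Fin nx → ℝ)),
        xs 0 = x0 → (∀ k, ds k ∈ 𝔻) →
        (∀ k, xs (k + 1) = (ds k).1 *ᵥ xs k + (ds k).2.1 *ᵥ κ k (xs k) + (ds k).2.2) →
        ∀ k, xs k ∈ S k := by
  obtain ⟨u0, hu0, -⟩ := h 0 x0 hx0
  choose κ hκU hκ using h
  refine ⟨fun k x => if hx : x ∈ S k then κ k x hx else u0, fun k x => ?_, ?_⟩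
  · dsimp only
    split_ifs with hx
    exacts [hκU k x hx, hu0]
  · intro xs ds hxs0 hds hrec k
    induction k with
    | zero => exact hxs0 ▸ hx0
    | succ k ih =>
      simpa only [hrec k, dif_pos ih] using hκ k (xs k) ih (ds k) (hds k)

end RobustlySteers

theorem Convex.nested_smul_add_one_sub_smul {E : Type*} [AddCommGroup E] [Module ℝ E]
    {X Xs : Set E} (hXs : Convex ℝ Xs) {lam μ : ℝ} (hlam1 : lam ≤ 1)
    (hμ0 : 0 ≤ μ) (hμ1 : μ ≤ 1) :
    μ • (lam • X + (1 - lam) • Xs) + (1 - μ) • Xs = (μ * lam) • X + (1 - μ * lam) • Xs := by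
  rw [smul_add, smul_smul, smul_smul, add_assoc,
    ← hXs.add_smul (mul_nonneg hμ0 (sub_nonneg.2 hlam1)) (sub_nonneg.2 hμ1)]
  congr 2
  ring

theorem robustlySteers_contraction_step {nx nu : ℕ}
    {𝔻 : Set (Matrix (Fin nx) (Fin nx) ℝ × Matrix (Fin nx) (Fin nu) ℝ × (Fin nx → ℝ))}
    {𝕌 : Set (Fin nu → ℝ)} (hU : Convex ℝ 𝕌) {X Xs : Set (Fin nx → ℝ)}
    (hXscv : Convex ℝ Xs) (hXs : RobustlySteers 𝔻 𝕌 Xs Xs) {lam : ℝ} (hlam0 : 0 ≤ lam)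
    (hlam1 : lam ≤ 1) (hcontr : RobustlySteers 𝔻 𝕌 X (lam • X + (1 - lam) • Xs)) (k : ℕ) :
    RobustlySteers 𝔻 𝕌 (lam ^ k • X + (1 - lam ^ k) • Xs)
      (lam ^ (k + 1) • X + (1 - lam ^ (k + 1)) • Xs) := by
  have hk0 := pow_nonneg hlam0 k
  have hk1 := pow_le_one₀ hlam0 hlam1 (n := k)
  have := hcontr.smul_add_smul hU hXs hk0 (sub_nonneg.2 hk1) (add_sub_cancel _ _)
  rwa [hXscv.nested_smul_add_one_sub_smul hlam1 hk0 hk1, ← pow_succ] at this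

theorem stmt_14_general {nx nu : ℕ}
    (𝔻 : Set (Matrix (Fin nx) (Fin nx) ℝ × Matrix (Fin nx) (Fin nu) ℝ × (Fin nx → ℝ)))
    (hDne : 𝔻.Nonempty)
    (𝕏 : Set (Fin nx → ℝ)) (𝕌 : Set (Fin nu → ℝ)) (hUcv : Convex ℝ 𝕌)
    (Xs : Set (Fin nx → ℝ)) (hXs : IsRCI 𝔻 𝕏 𝕌 Xs)
    (lam : ℝ) (hlam0 : 0 ≤ lam) (hlam1 : lam < 1)
    (X : Set (Fin nx → ℝ))
    (hcontr : RobustLambdaContractive 𝔻 𝕌 Xs lam X) :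
    (∀ k : ℕ, ∀ x ∈ lam ^ k • X + (1 - lam ^ k) • Xs,
      ∃ u ∈ 𝕌, ∀ d ∈ 𝔻,
        d.1 *ᵥ x + d.2.1 *ᵥ u + d.2.2 ∈
          lam ^ (k + 1) • X + (1 - lam ^ (k + 1)) • Xs) ∧
    (∀ x0 ∈ X, ∃ κ : ℕ → (Fin nx → ℝ) → (Fin nu → ℝ),
      (∀ k x, κ k x ∈ 𝕌) ∧
      ∀ (xs : ℕ → (Fin nx → ℝ))
        (ds : ℕ → Matrix (Fin nx) (Fin nx) ℝ × Matrix (Fin nx) (Fin nu) ℝ × (Fin nx → ℝ)),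
        xs 0 = x0 → (∀ k, ds k ∈ 𝔻) →
        (∀ k, xs (k + 1) = (ds k).1 *ᵥ xs k + (ds k).2.1 *ᵥ κ k (xs k) + (ds k).2.2) →
        ∀ k, xs k ∈ lam ^ k • X + (1 - lam ^ k) • Xs) := by
  have hstep := robustlySteers_contraction_step hUcv hXs.2.2.1 hXs.2.2.2 hlam0 hlam1.le hcontr
  refine ⟨hstep, fun x0 hx0 => RobustlySteers.exists_feedback hstep ?_⟩
  have hXsne : Xs.Nonempty := by
    obtain ⟨d, hd⟩ := hDne
    obtain ⟨_, -, hu⟩ := hcontr x0 hx0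
    obtain ⟨-, -, -, ⟨b, hb, -⟩, -⟩ := hu d hd
    exact ⟨b, hb⟩
  simpa [zero_smul_set hXsne] using hx0

/-- robust exponential stabilizability step in the proof of
Lemma 2: with `X_k := λᵏX ⊕ (1−λᵏ)X_s`, from any `x ∈ X_k` one can robustly
steer into `X_{k+1}`; in particular, from any `x₀ ∈ X` there are feedback
controls keeping the state in `X_k` at every step `k`, regardless of the
realization of the uncertainty. -/
theorem stmt_14 {nx nu : ℕ}
    (𝔻 : Set (Matrix (Fin nx) (Fin nx) ℝ × Matrix (Fin nx) (Fin nu) ℝ × (Fin nx → ℝ)))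
    (hDne : 𝔻.Nonempty) (hDcomp : IsCompact 𝔻) (hDcv : Convex ℝ 𝔻)
    (𝕏 : Set (Fin nx → ℝ)) (𝕌 : Set (Fin nu → ℝ)) (hUcv : Convex ℝ 𝕌)
    (Xs : Set (Fin nx → ℝ)) (hXs : IsRCI 𝔻 𝕏 𝕌 Xs)
    (lam : ℝ) (hlam0 : 0 ≤ lam) (hlam1 : lam < 1)
    (X : Set (Fin nx → ℝ)) (hXsub : X ⊆ 𝕏) (hXcomp : IsCompact X)
    (hXcv : Convex ℝ X)
    (hcontr : RobustLambdaContractive 𝔻 𝕌 Xs lam X) :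
    (∀ k : ℕ, ∀ x ∈ lam ^ k • X + (1 - lam ^ k) • Xs,
      ∃ u ∈ 𝕌, ∀ d ∈ 𝔻,
        d.1 *ᵥ x + d.2.1 *ᵥ u + d.2.2 ∈
          lam ^ (k + 1) • X + (1 - lam ^ (k + 1)) • Xs) ∧
    (∀ x0 ∈ X, ∃ κ : ℕ → (Fin nx → ℝ) → (Fin nu → ℝ),
      (∀ k x, κ k x ∈ 𝕌) ∧
      ∀ (xs : ℕ → (Fin nx → ℝ))
        (ds : ℕ → Matrix (Fin nx) (Fin nx) ℝ × Matrix (Fin nx) (Fin nu) ℝ × (Fin nx → ℝ)),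
        xs 0 = x0 → (∀ k, ds k ∈ 𝔻) →
        (∀ k, xs (k + 1) = (ds k).1 *ᵥ xs k + (ds k).2.1 *ᵥ κ k (xs k) + (ds k).2.2) →
        ∀ k, xs k ∈ lam ^ k • X + (1 - lam ^ k) • Xs) :=
  stmt_14_general 𝔻 hDne 𝕏 𝕌 hUcv Xs hXs lam hlam0 hlam1 X hcontr
end
end
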